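/- arXiv:1809.02960 — 3 statements merged into one kernel-verified Lean document; each statement's English description precedes it below -/
import Mathlib

section
/- Let G be a simple connected graph on vertex set {1,…,n} such that P_G is reflexive. Then the map f(λ) := ((n−1)/n)·𝟙 − λ is a bijection from Λ(P_G) to itself, and for every λ ∈ Λ(P_G), ht(λ) = i if and only if ht(f(λ)) = n−1−i. -/
open Matrix Finset

/-- The number of spanning trees of `G`: spanning subgraphs of `G` which are trees. -/
noncomputable def spanningTreeCount {V : Type*} (G : SimpleGraph V) : ℕ :=
  Nat.card {H : SimpleGraph V // H ≤ G ∧ H.IsTree}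

/-- The integer Laplacian matrix of a graph on `Fin m`. -/
noncomputable def lap {m : ℕ} (G : SimpleGraph (Fin m)) : Matrix (Fin m) (Fin m) ℤ :=
  letI : DecidableRel G.Adj := fun _ _ => Classical.dec _
  SimpleGraph.lapMatrix ℤ G

/-- The matrix `[L_G(m) | 𝟙]` : the Laplacian with its last column deleted and a column
of all ones appended. -/
noncomputable def lapAug {m : ℕ} (G : SimpleGraph (Fin m)) : Matrix (Fin m) (Fin m) ℤ :=
  Matrix.of fun r j => if (j : ℕ) + 1 = m then 1 else lap G r j

/-- The Laplacian matrix with its `i`-th column deleted. -/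
noncomputable def lapDel {k : ℕ} (G : SimpleGraph (Fin (k+1))) (i : Fin (k+1)) :
    Matrix (Fin (k+1)) (Fin k) ℤ :=
  (lap G).submatrix id i.succAbove

/-- `Λ(P)` for a simplex whose augmented vertex matrix is `M`: the fractional vectors
`λ` with `0 ≤ λᵢ < 1` such that `λ·M` has integer entries. -/
def Lambda {m : ℕ} (M : Matrix (Fin m) (Fin m) ℤ) : Set (Fin m → ℚ) :=
  {lam | (∀ i, 0 ≤ lam i ∧ lam i < 1) ∧
    ∀ j, ∃ z : ℤ, (Matrix.vecMul lam (M.map (fun a : ℤ => (a : ℚ)))) j = (z : ℚ)}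

/-- The Laplacian simplex `P_G ⊆ ℝ^{m-1}` : the convex hull of the rows of the Laplacian
matrix with its last column deleted. -/
noncomputable def PG {m : ℕ} (G : SimpleGraph (Fin m)) : Set (Fin (m-1) → ℝ) :=
  convexHull ℝ (Set.range fun r : Fin m => fun j : Fin (m-1) =>
    (lap G r ⟨(j : ℕ), by have := j.isLt; omega⟩ : ℝ))

/-- A polytope `P` (with `0` in its interior) is reflexive if its dual
`{x | x·y ≤ 1 ∀ y ∈ P}` is a lattice polytope, i.e. the convex hull of finitely many
integer points. -/
def IsReflexive {d : ℕ} (P : Set (Fin d → ℝ)) : Prop :=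
  (0 : Fin d → ℝ) ∈ interior P ∧
  ∃ S : Finset (Fin d → ℝ), (∀ v ∈ S, ∀ i, ∃ z : ℤ, v i = (z : ℝ)) ∧
    {x : Fin d → ℝ | ∀ y ∈ P, ∑ i, x i * y i ≤ 1} = convexHull ℝ (S : Set (Fin d → ℝ))

/-- The linear code over `ℤ/m` associated to a (reflexive) Laplacian simplex:
`C(P_G) = { x mod m : x/m ∈ Λ(P_G) }`. -/
def code {m : ℕ} (G : SimpleGraph (Fin m)) : Set (Fin m → ZMod m) :=
  {c | ∃ x : Fin m → ℤ, (∀ i, (x i : ZMod m) = c i) ∧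
    (fun i => (x i : ℚ) / (m : ℚ)) ∈ Lambda (lapAug G)}



lemma lap_symm {m : ℕ} (G : SimpleGraph (Fin m)) (i j : Fin m) : lap G i j = lap G j i := by
  letI : DecidableRel G.Adj := fun _ _ => Classical.dec _
  exact (SimpleGraph.isSymm_lapMatrix (R := ℤ) G).apply j i

lemma lap_row_sum {m : ℕ} (G : SimpleGraph (Fin m)) (i : Fin m) : ∑ j, lap G i j = 0 := by
  letI : DecidableRel G.Adj := fun _ _ => Classical.dec _
  have h := SimpleGraph.lapMatrix_mulVec_const_eq_zero (R := ℤ) G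
  have := congrFun h i
  have h2 : ∑ j, SimpleGraph.lapMatrix ℤ G i j = 0 := by simpa [Matrix.mulVec, dotProduct] using this
  exact h2

lemma lap_col_sum {m : ℕ} (G : SimpleGraph (Fin m)) (j : Fin m) : ∑ i, lap G i j = 0 := by
  rw [show (∑ i, lap G i j) = ∑ i, lap G j i from Finset.sum_congr rfl fun i _ => lap_symm G i j]
  exact lap_row_sum G j

lemma lap_cast_real {m : ℕ} (G : SimpleGraph (Fin m)) [inst : DecidableRel G.Adj] (i j : Fin m) :
    ((lap G i j : ℤ) : ℝ) = G.lapMatrix ℝ i j := by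
  simp [lap, SimpleGraph.lapMatrix, SimpleGraph.degMatrix, SimpleGraph.adjMatrix,
    Matrix.diagonal, Matrix.sub_apply]
  split_ifs <;> simp <;> congr!

lemma lap_ker {m : ℕ} (G : SimpleGraph (Fin m)) (hG : G.Connected)
    (x : Fin m → ℝ) (hx : ∀ i, ∑ j, (lap G i j : ℝ) * x j = 0) :
    ∀ i j, x i = x j := by
  letI : DecidableRel G.Adj := fun _ _ => Classical.dec _
  have h0 : Matrix.toLin' (G.lapMatrix ℝ) x = 0 := by
    rw [Matrix.toLin'_apply]
    funext i
    have := hx i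
    simp only [Matrix.mulVec, dotProduct, Pi.zero_apply]
    rw [← this]
    exact Finset.sum_congr rfl fun j _ => by rw [lap_cast_real]
  intro i j
  exact (SimpleGraph.lapMatrix_mulVec_eq_zero_iff_forall_reachable (G := G)).mp
    (by rwa [Matrix.toLin'_apply] at h0) i j
    (hG.preconnected i j)

/-- index of column `j` inside `Fin (n+1)` -/
def colIdx {n : ℕ} (j : Fin n) : Fin (n+1) := ⟨(j : ℕ), by omega⟩

noncomputable def Vmat {n : ℕ} (G : SimpleGraph (Fin (n+1))) : Fin (n+1) → Fin n → ℝ :=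
  fun i j => ((lap G i (colIdx j) : ℤ) : ℝ)

noncomputable def Bmat {n : ℕ} (G : SimpleGraph (Fin (n+1))) (r : Fin (n+1)) :
    Matrix (Fin n) (Fin n) ℝ :=
  Matrix.of fun i j => Vmat G (r.succAbove i) j

lemma Vmat_col_sum {n : ℕ} (G : SimpleGraph (Fin (n+1))) (j : Fin n) :
    ∑ i, Vmat G i j = 0 := by
  have h := lap_col_sum G (colIdx j)
  have : ((∑ i, lap G i (colIdx j) : ℤ) : ℝ) = 0 := by rw [h]; simp
  rw [← this]
  push_cast [Vmat]
  rfl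

lemma Bmat_mulVec_eq_zero {n : ℕ} (G : SimpleGraph (Fin (n+1))) (hG : G.Connected)
    (r : Fin (n+1)) (u : Fin n → ℝ) (hu : (Bmat G r) *ᵥ u = 0) : u = 0 := by
  set x : Fin (n+1) → ℝ := fun k => if h : (k : ℕ) < n then u ⟨k, h⟩ else 0 with hxdef
  have hx0 : x (Fin.last n) = 0 := by simp [hxdef]
  have hxc : ∀ j : Fin n, x (colIdx j) = u j := by
    intro j
    simp only [hxdef, colIdx]
    rw [dif_pos j.isLt]
  -- row sums against x
  have hrow : ∀ i : Fin (n+1), ∑ j, (lap G i j : ℝ) * x j = ∑ j : Fin n, Vmat G i j * u j := by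
    intro i
    rw [Fin.sum_univ_castSucc]
    rw [hx0, mul_zero, add_zero]
    refine Finset.sum_congr rfl fun j _ => ?_
    have hc : (j.castSucc : Fin (n+1)) = colIdx j := by
      ext; simp [colIdx]
    rw [hc, hxc j]
    rfl
  have htot : ∑ i, ∑ j : Fin n, Vmat G i j * u j = 0 := by
    rw [Finset.sum_comm]
    refine Finset.sum_eq_zero fun j _ => ?_
    rw [← Finset.sum_mul, Vmat_col_sum, zero_mul]
  have hne : ∀ i' : Fin n, ∑ j : Fin n, Vmat G (r.succAbove i') j * u j = 0 := by
    intro i'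
    have := congrFun hu i'
    simpa [Bmat, Matrix.mulVec, dotProduct] using this
  have hr : ∑ j : Fin n, Vmat G r j * u j = 0 := by
    have hsplit := Fin.sum_univ_succAbove (fun i => ∑ j : Fin n, Vmat G i j * u j) r
    rw [htot] at hsplit
    have : ∑ i', ∑ j : Fin n, Vmat G (r.succAbove i') j * u j = 0 :=
      Finset.sum_eq_zero fun i' _ => hne i'
    linarith [hsplit, this]
  have hker : ∀ i : Fin (n+1), ∑ j, (lap G i j : ℝ) * x j = 0 := by
    intro i
    rw [hrow i]
    rcases eq_or_ne i r with rfl | hir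
    · exact hr
    · obtain ⟨i', rfl⟩ := Fin.exists_succAbove_eq hir
      exact hne i'
  have hconst := lap_ker G hG x hker
  funext j
  have := hconst (colIdx j) (Fin.last n)
  rw [hxc j, hx0] at this
  simpa using this

lemma Bmat_injective {n : ℕ} (G : SimpleGraph (Fin (n+1))) (hG : G.Connected) (r : Fin (n+1)) :
    Function.Injective (Matrix.toLin' (Bmat G r)) := by
  rw [← LinearMap.ker_eq_bot]
  rw [LinearMap.ker_eq_bot']
  intro u hu
  exact Bmat_mulVec_eq_zero G hG r u (by rwa [Matrix.toLin'_apply] at hu)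

lemma Bmat_exists_a {n : ℕ} (G : SimpleGraph (Fin (n+1))) (hG : G.Connected) (r : Fin (n+1)) :
    ∃ a : Fin n → ℝ, (Bmat G r) *ᵥ a = fun _ => 1 := by
  have hsurj := LinearMap.injective_iff_surjective.mp (Bmat_injective G hG r)
  obtain ⟨a, ha⟩ := hsurj (fun _ => 1)
  exact ⟨a, by rwa [Matrix.toLin'_apply] at ha⟩

lemma exists_dualvec_real {n : ℕ} (G : SimpleGraph (Fin (n+1))) (hG : G.Connected)
    (href : IsReflexive (PG G)) (r : Fin (n+1)) :
    ∃ a : Fin n → ℝ, (∀ i, ∑ j, a j * Vmat G i j = if i = r then -(n:ℝ) else 1) ∧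
      (∀ j, ∃ z : ℤ, a j = (z : ℝ)) := by
  obtain ⟨a, ha⟩ := Bmat_exists_a G hG r
  have hrow1 : ∀ i' : Fin n, ∑ j, a j * Vmat G (r.succAbove i') j = 1 := by
    intro i'
    have := congrFun ha i'
    simp only [Matrix.mulVec, dotProduct, Bmat, Matrix.of_apply] at this
    rw [← this]
    exact Finset.sum_congr rfl fun j _ => mul_comm _ _
  have hrowr : ∑ j, a j * Vmat G r j = -(n : ℝ) := by
    have htot : ∑ i, ∑ j, a j * Vmat G i j = 0 := by
      rw [Finset.sum_comm]
      refine Finset.sum_eq_zero fun j _ => ?_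
      rw [← Finset.mul_sum, Vmat_col_sum, mul_zero]
    have hsplit := Fin.sum_univ_succAbove (fun i => ∑ j, a j * Vmat G i j) r
    rw [htot] at hsplit
    have h1 : ∑ i' : Fin n, ∑ j, a j * Vmat G (r.succAbove i') j = (n : ℝ) := by
      rw [Finset.sum_congr rfl fun i' _ => hrow1 i']
      simp
    rw [h1] at hsplit
    linarith
  have hvals : ∀ i, ∑ j, a j * Vmat G i j = if i = r then -(n:ℝ) else 1 := by
    intro i
    rcases eq_or_ne i r with rfl | hir
    · simpa using hrowr
    · obtain ⟨i', rfl⟩ := Fin.exists_succAbove_eq hir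
      simpa [Fin.succAbove_ne r i'] using hrow1 i'
  have hvert : ∀ i, ∑ j, a j * Vmat G i j ≤ 1 := by
    intro i
    rw [hvals i]
    split_ifs
    · have : (0:ℝ) ≤ n := Nat.cast_nonneg n
      linarith
    · exact le_rfl
  have hlin : IsLinearMap ℝ (fun y : Fin n → ℝ => ∑ j, a j * y j) := by
    constructor
    · intro x y; simp [mul_add, Finset.sum_add_distrib]
    · intro c x
      simp only [Pi.smul_apply, smul_eq_mul, Finset.mul_sum]
      exact Finset.sum_congr rfl fun j _ => by ring
  have hdualmem : ∀ y ∈ PG G, ∑ j, a j * y j ≤ 1 := by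
    intro y hy
    have hy' : y ∈ convexHull ℝ (Set.range fun i => Vmat G i) := hy
    exact convexHull_min (by rintro _ ⟨i, rfl⟩; exact hvert i) (convex_halfSpace_le hlin 1) hy'
  obtain ⟨S0, hSint0, hSdual0⟩ := href.2
  let S : Finset (Fin n → ℝ) := S0
  have hSint : ∀ v ∈ S, ∀ i : Fin n, ∃ z : ℤ, v i = (z : ℝ) := hSint0
  have hSdual : {x : Fin n → ℝ | ∀ y ∈ PG G, ∑ i, x i * y i ≤ 1}
      = convexHull ℝ (S : Set (Fin n → ℝ)) := hSdual0
  have haS : a ∈ convexHull ℝ (S : Set (Fin n → ℝ)) := by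
    rw [← hSdual]
    exact fun y hy => hdualmem y hy
  -- every element of S lies in the dual
  have hsd : ∀ s ∈ S, ∀ i, ∑ j, s j * Vmat G i j ≤ 1 := by
    intro s hs i
    have hmem : s ∈ convexHull ℝ (S : Set (Fin n → ℝ)) := subset_convexHull ℝ _ hs
    rw [← hSdual] at hmem
    have hV : (Vmat G i) ∈ PG G := subset_convexHull ℝ _ (Set.mem_range_self i)
    exact hmem (Vmat G i) hV
  -- the linear functional φ
  set φ : (Fin n → ℝ) → ℝ := fun s => ∑ i' : Fin n, ∑ j, s j * Vmat G (r.succAbove i') j with hφ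
  have hφa : φ a = (n : ℝ) := by
    simp only [hφ]
    rw [Finset.sum_congr rfl fun i' _ => hrow1 i']
    simp
  have hφle : ∀ s ∈ S, φ s ≤ (n : ℝ) := by
    intro s hs
    have : φ s ≤ ∑ _i' : Fin n, (1:ℝ) :=
      Finset.sum_le_sum fun i' _ => hsd s hs (r.succAbove i')
    simpa using this
  rw [Finset.convexHull_eq] at haS
  obtain ⟨w, hw0, hw1, hwa⟩ := haS
  rw [Finset.centerMass_eq_of_sum_1 _ _ hw1] at hwa
  have ha' : ∀ j, a j = ∑ s ∈ S, w s * s j := by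
    intro j
    rw [← hwa]
    simp [Finset.sum_apply]
  have step : ∀ i' : Fin n, ∑ j : Fin n, a j * Vmat G (r.succAbove i') j
      = ∑ s ∈ S, w s * ∑ j : Fin n, s j * Vmat G (r.succAbove i') j := by
    intro i'
    calc ∑ j : Fin n, a j * Vmat G (r.succAbove i') j
        = ∑ j : Fin n, ∑ s ∈ S, w s * s j * Vmat G (r.succAbove i') j := by
          refine Finset.sum_congr rfl fun j _ => ?_
          rw [ha' j, Finset.sum_mul]
      _ = ∑ s ∈ S, ∑ j : Fin n, w s * s j * Vmat G (r.succAbove i') j := Finset.sum_comm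
      _ = ∑ s ∈ S, w s * ∑ j : Fin n, s j * Vmat G (r.succAbove i') j := by
          refine Finset.sum_congr rfl fun s _ => ?_
          rw [Finset.mul_sum]
          exact Finset.sum_congr rfl fun j _ => by ring
  have hφcomb : φ a = ∑ s ∈ S, w s * φ s := by
    simp only [hφ]
    rw [Finset.sum_congr rfl fun i' _ => step i', Finset.sum_comm]
    exact Finset.sum_congr rfl fun s _ => (Finset.mul_sum _ _ _).symm
  have hkey : ∑ s ∈ S, w s * ((n:ℝ) - φ s) = 0 := by
    simp only [mul_sub]
    rw [Finset.sum_sub_distrib, ← Finset.sum_mul, hw1, ← hφcomb, hφa, one_mul, sub_self]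
  have hterm := (Finset.sum_eq_zero_iff_of_nonneg (fun s hs =>
      mul_nonneg (hw0 s hs) (by linarith [hφle s hs]))).mp hkey
  have hs0 : ∃ s0 ∈ S, w s0 ≠ 0 := by
    by_contra hcon
    push_neg at hcon
    rw [Finset.sum_eq_zero (fun s hs => hcon s hs)] at hw1
    exact one_ne_zero hw1.symm
  obtain ⟨s0, hs0S, hw0ne⟩ := hs0
  have hφs0 : φ s0 = (n : ℝ) := by
    have := hterm s0 hs0S
    rcases mul_eq_zero.mp this with h | h
    · exact absurd h hw0ne
    · linarith
  have hinner : ∀ i' : Fin n, ∑ j, s0 j * Vmat G (r.succAbove i') j = 1 := by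
    have hz : ∑ i' : Fin n, ((1:ℝ) - ∑ j, s0 j * Vmat G (r.succAbove i') j) = 0 := by
      rw [Finset.sum_sub_distrib]
      simp only [Finset.sum_const, Finset.card_univ, Fintype.card_fin, nsmul_eq_mul, mul_one]
      rw [show ∑ i' : Fin n, ∑ j, s0 j * Vmat G (r.succAbove i') j = φ s0 from rfl, hφs0]
      ring
    have := (Finset.sum_eq_zero_iff_of_nonneg (fun i' _ => by
        linarith [hsd s0 hs0S (r.succAbove i')])).mp hz
    intro i'
    have h := this i' (Finset.mem_univ i')
    linarith
  have hs0a : s0 = a := by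
    apply Bmat_injective G hG r
    rw [Matrix.toLin'_apply, Matrix.toLin'_apply, ha]
    funext i'
    simp only [Matrix.mulVec, dotProduct, Bmat, Matrix.of_apply]
    rw [← hinner i']
    exact Finset.sum_congr rfl fun j _ => mul_comm _ _
  refine ⟨a, hvals, fun j => ?_⟩
  obtain ⟨z, hz⟩ := hSint s0 hs0S j
  exact ⟨z, by rw [← hs0a]; exact hz⟩

lemma exists_dualvec_int {n : ℕ} (G : SimpleGraph (Fin (n+1))) (hG : G.Connected)
    (href : IsReflexive (PG G)) (r : Fin (n+1)) :
    ∃ az : Fin n → ℤ, ∀ i, ∑ j, az j * lap G i (colIdx j) = if i = r then -(n:ℤ) else 1 := by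
  obtain ⟨a, hvals, hintz⟩ := exists_dualvec_real G hG href r
  choose az haz using hintz
  refine ⟨az, fun i => ?_⟩
  have hv := hvals i
  have hsum : ∑ j, (az j : ℝ) * ((lap G i (colIdx j) : ℤ) : ℝ) = if i = r then -(n:ℝ) else 1 := by
    rw [← hv]
    exact Finset.sum_congr rfl fun j _ => by rw [haz j]; rfl
  rcases eq_or_ne i r with rfl | hir
  · rw [if_pos rfl] at hsum ⊢
    exact_mod_cast hsum
  · rw [if_neg hir] at hsum ⊢
    exact_mod_cast hsum

lemma lam_scaled_int {n : ℕ} (G : SimpleGraph (Fin (n+1))) (hG : G.Connected)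
    (href : IsReflexive (PG G)) :
    ∀ lam ∈ Lambda (lapAug G), ∀ r, ∃ z : ℤ, ((n:ℚ)+1) * lam r = (z:ℚ) := by
  intro lam hlam r
  obtain ⟨hbd, hintq⟩ := hlam
  obtain ⟨az, haz⟩ := exists_dualvec_int G hG href r
  have hMq : ∀ (i j : Fin (n+1)), ((lapAug G).map (fun a : ℤ => (a:ℚ))) i j
      = if (j:ℕ) + 1 = n+1 then 1 else ((lap G i j : ℤ) : ℚ) := by
    intro i j
    simp only [Matrix.map_apply, lapAug, Matrix.of_apply]
    split_ifs <;> simp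
  obtain ⟨h, hh⟩ := hintq (Fin.last n)
  have hheight : ∑ i, lam i = (h:ℚ) := by
    rw [← hh]
    simp [Matrix.vecMul, dotProduct, lapAug]
  choose zc hzc using fun j : Fin n => hintq (colIdx j)
  have hcol : ∀ j : Fin n, ∑ i, lam i * ((lap G i (colIdx j) : ℤ) : ℚ) = (zc j : ℚ) := by
    intro j
    rw [← hzc j]
    have hne : ¬ ((colIdx j : Fin (n+1)) : ℕ) + 1 = n + 1 := by
      have := j.isLt
      simp only [colIdx]
      omega
    simp only [Matrix.vecMul, dotProduct, hMq, if_neg hne]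
  have hazq : ∀ i, ∑ j : Fin n, (az j : ℚ) * ((lap G i (colIdx j) : ℤ) : ℚ)
      = if i = r then -(n:ℚ) else 1 := by
    intro i
    have := haz i
    rcases eq_or_ne i r with rfl | hir
    · rw [if_pos rfl] at this ⊢; exact_mod_cast this
    · rw [if_neg hir] at this ⊢; exact_mod_cast this
  have hcomb : ∑ j : Fin n, (az j : ℚ) * (zc j : ℚ) = (h:ℚ) - ((n:ℚ)+1) * lam r := by
    calc ∑ j : Fin n, (az j : ℚ) * (zc j : ℚ)
        = ∑ j : Fin n, ∑ i, (az j : ℚ) * (lam i * ((lap G i (colIdx j) : ℤ) : ℚ)) := by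
          refine Finset.sum_congr rfl fun j _ => ?_
          rw [← hcol j, Finset.mul_sum]
      _ = ∑ i, ∑ j : Fin n, (az j : ℚ) * (lam i * ((lap G i (colIdx j) : ℤ) : ℚ)) :=
          Finset.sum_comm
      _ = ∑ i, lam i * ∑ j : Fin n, (az j : ℚ) * ((lap G i (colIdx j) : ℤ) : ℚ) := by
          refine Finset.sum_congr rfl fun i _ => ?_
          rw [Finset.mul_sum]
          exact Finset.sum_congr rfl fun j _ => by ring
      _ = ∑ i, lam i * (if i = r then -(n:ℚ) else 1) := by
          exact Finset.sum_congr rfl fun i _ => by rw [hazq i]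
      _ = ∑ i, (lam i - (if i = r then ((n:ℚ)+1) * lam i else 0)) := by
          refine Finset.sum_congr rfl fun i _ => ?_
          split_ifs <;> ring
      _ = (∑ i, lam i) - ((n:ℚ)+1) * lam r := by
          rw [Finset.sum_sub_distrib, Finset.sum_ite_eq' Finset.univ r
            (fun i => ((n:ℚ)+1) * lam i), if_pos (Finset.mem_univ r)]
      _ = (h:ℚ) - ((n:ℚ)+1) * lam r := by rw [hheight]
  refine ⟨h - ∑ j : Fin n, az j * zc j, ?_⟩
  push_cast
  linarith [hcomb]

/-- If `P_G` is reflexive (`G` on `n+1` vertices), the map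
`f(λ) = (n/(n+1))·𝟙 − λ` is a bijection of `Λ(P_G)` onto itself, and for every
`λ ∈ Λ(P_G)` and integer `i`, `ht(λ) = i` iff `ht(f(λ)) = n − i`. -/
theorem Lambda_reflection_bijOn {n : ℕ}
    (G : SimpleGraph (Fin (n+1))) (hG : G.Connected)
    (href : IsReflexive (PG G)) :
    Set.BijOn (fun lam : Fin (n+1) → ℚ => fun j => (n : ℚ) / ((n : ℚ) + 1) - lam j)
      (Lambda (lapAug G)) (Lambda (lapAug G)) ∧
    ∀ lam ∈ Lambda (lapAug G), ∀ i : ℤ,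
      ((∑ j, lam j) = (i : ℚ)) ↔
        ((∑ j, ((n : ℚ) / ((n : ℚ) + 1) - lam j)) = (n : ℚ) - (i : ℚ)) := by
  have hn1 : (0:ℚ) < (n:ℚ) + 1 := by positivity
  set c : ℚ := (n:ℚ) / ((n:ℚ)+1) with hc
  have hcmul : ((n:ℚ)+1) * c = n := by rw [hc]; field_simp
  have hc1 : c < 1 := by rw [hc, div_lt_one hn1]; linarith
  have hc0 : 0 ≤ c := by rw [hc]; positivity
  have hsum : ∀ lam : Fin (n+1) → ℚ, ∑ j, (c - lam j) = (n:ℚ) - ∑ j, lam j := by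
    intro lam
    rw [Finset.sum_sub_distrib, Finset.sum_const, Finset.card_univ, Fintype.card_fin,
      nsmul_eq_mul]
    have : ((n+1 : ℕ) : ℚ) * c = (n:ℚ) := by push_cast; exact hcmul
    rw [this]
  have hmaps : Set.MapsTo (fun lam : Fin (n+1) → ℚ => fun j => c - lam j)
      (Lambda (lapAug G)) (Lambda (lapAug G)) := by
    intro lam hlam
    obtain ⟨hbd, hintq⟩ := hlam
    constructor
    · intro i
      obtain ⟨z, hz⟩ := lam_scaled_int G hG href lam ⟨hbd, hintq⟩ i
      have h0 := (hbd i).1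
      have h1 := (hbd i).2
      have hzn : (z:ℚ) ≤ n := by
        have hlt : (z:ℚ) < (n:ℚ)+1 := by rw [← hz]; nlinarith
        have hlt' : z < n+1 := by exact_mod_cast hlt
        have : z ≤ (n:ℤ) := by omega
        exact_mod_cast this
      have hle : lam i ≤ c := by
        rw [hc, le_div_iff₀ hn1]
        nlinarith [hz]
      refine ⟨?_, ?_⟩
      · show (0:ℚ) ≤ c - lam i
        linarith
      · show c - lam i < 1
        linarith
    · intro j
      obtain ⟨z, hz⟩ := hintq j
      have hsubv : Matrix.vecMul (fun j' => c - lam j') ((lapAug G).map (fun a : ℤ => (a:ℚ)))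
          = Matrix.vecMul (fun _ => c) ((lapAug G).map (fun a : ℤ => (a:ℚ)))
            - Matrix.vecMul lam ((lapAug G).map (fun a : ℤ => (a:ℚ))) := by
        rw [← Matrix.sub_vecMul]
        rfl
      have hcolsum : ∑ i, ((lapAug G).map (fun a : ℤ => (a:ℚ))) i j
          = if (j:ℕ)+1 = n+1 then ((n:ℚ)+1) else 0 := by
        by_cases hj : (j:ℕ)+1 = n+1
        · have hj' : (j:ℕ) = n := by omega
          rw [if_pos hj]
          have : ∀ i : Fin (n+1), ((lapAug G).map (fun a : ℤ => (a:ℚ))) i j = 1 := by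
            intro i; simp [lapAug, hj']
          rw [Finset.sum_congr rfl fun i _ => this i]
          simp
        · have hj' : ¬ (j:ℕ) = n := by omega
          rw [if_neg hj]
          have h0 : ((∑ i, lap G i j : ℤ) : ℚ) = 0 := by rw [lap_col_sum]; simp
          rw [← h0]
          push_cast
          exact Finset.sum_congr rfl fun i _ => by simp [lapAug, hj']
      have hconst : (Matrix.vecMul (fun _ => c) ((lapAug G).map (fun a : ℤ => (a:ℚ)))) j
          = if (j:ℕ)+1 = n+1 then (n:ℚ) else 0 := by
        simp only [Matrix.vecMul, dotProduct]
        rw [← Finset.mul_sum, hcolsum]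
        split_ifs
        · rw [mul_comm]; exact hcmul
        · ring
      refine ⟨(if (j:ℕ)+1 = n+1 then (n:ℤ) else 0) - z, ?_⟩
      have heval : (Matrix.vecMul (fun j' => c - lam j')
          ((lapAug G).map (fun a : ℤ => (a:ℚ)))) j
          = (if (j:ℕ)+1 = n+1 then (n:ℚ) else 0) - (z:ℚ) := by
        rw [hsubv, Pi.sub_apply, hconst, hz]
      rw [heval]
      split_ifs <;> push_cast <;> ring
  constructor
  · have hinv : ∀ x : Fin (n+1) → ℚ, (fun j => c - (fun j' => c - x j') j) = x := by
      intro x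
      funext j
      simp
    exact Set.InvOn.bijOn ⟨fun x _ => hinv x, fun x _ => hinv x⟩ hmaps hmaps
  · intro lam _ i
    rw [hsum lam]
    constructor
    · intro hv; rw [hv]
    · intro hv; linarith
end

section
/- Let G' and G'' be simple connected graphs, each on vertex set {1,…,n}, such that the Laplacian simplices P_{G'} and P_{G''} are both reflexive. Then the Laplacian simplex P_{B(G',G'')} of their bridge is reflexive. -/
open Matrix Finset

/-- The bridge `B(G',G'')` on `{1,…,2m}`: `G'` on the first `m` vertices, `G''` on the
last `m` vertices, plus the bridge edge joining vertex `m-1` (the last vertex of `G'`)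
to vertex `2m-1` (the last vertex of `G''`)  (`0`-based). -/
def bridge {m : ℕ} (G' G'' : SimpleGraph (Fin m)) : SimpleGraph (Fin (m + m)) :=
  SimpleGraph.fromRel fun u v =>
    (∃ (hu : (u : ℕ) < m) (hv : (v : ℕ) < m), G'.Adj ⟨(u : ℕ), hu⟩ ⟨(v : ℕ), hv⟩) ∨
    (∃ (_ : m ≤ (u : ℕ)) (_ : m ≤ (v : ℕ)),
      G''.Adj ⟨(u : ℕ) - m, by have := u.isLt; omega⟩
        ⟨(v : ℕ) - m, by have := v.isLt; omega⟩) ∨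
    ((u : ℕ) = m - 1 ∧ (v : ℕ) = m + m - 1)

section Aux

open SimpleGraph

variable {k : ℕ}

/-- Truncated row of the Laplacian: row `r` with last entry dropped. -/
noncomputable def vrow (G : SimpleGraph (Fin (k+1))) (r : Fin (k+1)) : Fin k → ℝ :=
  fun j => ((lap G r ⟨(j : ℕ), by omega⟩ : ℤ) : ℝ)

lemma PG_eq (G : SimpleGraph (Fin (k+1))) :
    PG G = convexHull ℝ (Set.range (vrow G)) := rfl

/-- Extend a vector by a zero in the last coordinate. -/
noncomputable def ext0 (y : Fin k → ℝ) : Fin (k+1) → ℝ :=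
  fun i => if h : (i : ℕ) < k then y ⟨(i : ℕ), h⟩ else 0

open scoped Classical in
/-- Adjacency indicator. -/
noncomputable def aInd {m : ℕ} (G : SimpleGraph (Fin m)) (r c : Fin m) : ℝ :=
  if G.Adj r c then 1 else 0

/-- The `r`-th entry of `L_G · z`, written via adjacency indicators. -/
noncomputable def rowSum {m : ℕ} (G : SimpleGraph (Fin m)) (z : Fin m → ℝ) (r : Fin m) : ℝ :=
  ∑ c, aInd G r c * (z r - z c)

lemma aInd_symm {m : ℕ} (G : SimpleGraph (Fin m)) (r c : Fin m) : aInd G r c = aInd G c r := by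
  by_cases h : G.Adj r c
  · simp [aInd, h, h.symm]
  · have h' : ¬ G.Adj c r := fun hh => h hh.symm
    simp [aInd, h, h']

lemma lap_dot (G : SimpleGraph (Fin (k+1))) (r : Fin (k+1)) (z : Fin (k+1) → ℝ) :
    ∑ c, ((lap G r c : ℤ) : ℝ) * z c = rowSum G z r := by
  letI : DecidableRel G.Adj := fun _ _ => Classical.dec _
  have hl : lap G = G.lapMatrix ℤ := rfl
  have hentry : ∀ c, ((lap G r c : ℤ) : ℝ) =
      (if r = c then (G.degree r : ℝ) else 0) - (if G.Adj r c then 1 else 0) := by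
    intro c
    rw [hl]
    simp only [SimpleGraph.lapMatrix, SimpleGraph.degMatrix, Matrix.sub_apply,
      Matrix.diagonal_apply, SimpleGraph.adjMatrix_apply]
    push_cast
    split_ifs <;> norm_num
  have hdeg : (G.degree r : ℝ) = ∑ c, aInd G r c := by
    rw [SimpleGraph.degree_eq_sum_if_adj]
    refine Finset.sum_congr rfl fun c _ => ?_
    by_cases h : G.Adj r c <;> simp [aInd, h]
  calc ∑ c, ((lap G r c : ℤ) : ℝ) * z c
      = ∑ c, ((if r = c then (G.degree r : ℝ) else 0) * z c - (if G.Adj r c then 1 else 0) * z c) := by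
        refine Finset.sum_congr rfl fun c _ => ?_; rw [hentry c, sub_mul]
    _ = (G.degree r : ℝ) * z r - ∑ c, aInd G r c * z c := by
        rw [Finset.sum_sub_distrib]
        have e1 : ∑ c, (if r = c then (G.degree r : ℝ) else 0) * z c = (G.degree r : ℝ) * z r := by
          simp [ite_mul]
        have e2 : ∑ c, (if G.Adj r c then (1:ℝ) else 0) * z c = ∑ c, aInd G r c * z c := by
          refine Finset.sum_congr rfl fun c _ => ?_
          by_cases h : G.Adj r c <;> simp [aInd, h]
        rw [e1, e2]
    _ = rowSum G z r := by
        rw [hdeg, Finset.sum_mul, rowSum]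
        rw [← Finset.sum_sub_distrib]
        refine Finset.sum_congr rfl fun c _ => ?_
        ring

lemma dot_vrow (G : SimpleGraph (Fin (k+1))) (r : Fin (k+1)) (x : Fin k → ℝ) :
    ∑ q, x q * vrow G r q = rowSum G (ext0 x) r := by
  rw [← lap_dot]
  rw [Fin.sum_univ_castSucc]
  have hlast : ext0 x (Fin.last k) = 0 := by simp [ext0]
  rw [hlast, mul_zero, add_zero]
  refine Finset.sum_congr rfl fun q _ => ?_
  have h1 : ext0 x (Fin.castSucc q) = x q := by
    simp [ext0, Fin.castSucc, q.isLt]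
  have h2 : (⟨(q : ℕ), by omega⟩ : Fin (k+1)) = Fin.castSucc q := by
    ext; simp
  rw [h1, vrow, h2, mul_comm]

lemma sum_rowSum {m : ℕ} (G : SimpleGraph (Fin m)) (z : Fin m → ℝ) :
    ∑ r, rowSum G z r = 0 := by
  have h : ∑ r, ∑ c, aInd G r c * (z r - z c) = ∑ r, ∑ c, aInd G c r * (z r - z c) := by
    refine Finset.sum_congr rfl fun r _ => Finset.sum_congr rfl fun c _ => ?_
    rw [aInd_symm]
  unfold rowSum
  have h2 : ∑ r, ∑ c, aInd G r c * (z r - z c) = - ∑ r, ∑ c, aInd G r c * (z r - z c) := by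
    nth_rewrite 1 [h]
    rw [Finset.sum_comm, ← Finset.sum_neg_distrib]
    refine Finset.sum_congr rfl fun r _ => ?_
    rw [← Finset.sum_neg_distrib]
    refine Finset.sum_congr rfl fun c _ => ?_
    ring
  linarith [h2]
end Aux
section Aux2
open SimpleGraph
variable {k : ℕ}

lemma rowSum_eq_lapMatrix (G : SimpleGraph (Fin (k+1))) (z : Fin (k+1) → ℝ) (r : Fin (k+1)) :
    letI : DecidableRel G.Adj := fun _ _ => Classical.dec _
    (G.lapMatrix ℝ *ᵥ z) r = rowSum G z r := by
  letI : DecidableRel G.Adj := fun _ _ => Classical.dec _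
  have hl : lap G = G.lapMatrix ℤ := rfl
  have : ∀ c, ((lap G r c : ℤ) : ℝ) = G.lapMatrix ℝ r c := by
    intro c
    rw [hl]
    simp only [SimpleGraph.lapMatrix, SimpleGraph.degMatrix, Matrix.sub_apply,
      Matrix.diagonal_apply, SimpleGraph.adjMatrix_apply]
    push_cast
    split_ifs <;> norm_num
  rw [← lap_dot]
  simp only [Matrix.mulVec, dotProduct]
  refine Finset.sum_congr rfl fun c _ => ?_
  rw [this c]

/-- For a connected graph, vanishing of all `rowSum`s forces the vector to be constant. -/
lemma rowSum_zero_const (G : SimpleGraph (Fin (k+1))) (hG : G.Connected)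
    (z : Fin (k+1) → ℝ) (h : ∀ r, rowSum G z r = 0) (i j : Fin (k+1)) : z i = z j := by
  letI : DecidableRel G.Adj := fun _ _ => Classical.dec _
  have h0 : Matrix.toLin' (G.lapMatrix ℝ) z = 0 := by
    rw [Matrix.toLin'_apply]
    funext r
    have := rowSum_eq_lapMatrix G z r
    simp [this, h r]
  rw [Matrix.toLin'_apply, SimpleGraph.lapMatrix_mulVec_eq_zero_iff_forall_reachable] at h0
  exact h0 i j (hG.preconnected i j)

/-- If a vector pairs to zero with every truncated row, it is zero (connected case). -/
lemma span_vrow (G : SimpleGraph (Fin (k+1))) (hG : G.Connected)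
    (x : Fin k → ℝ) (h : ∀ r, ∑ q, x q * vrow G r q = 0) : x = 0 := by
  have hc : ∀ i j, ext0 x i = ext0 x j := by
    refine rowSum_zero_const G hG _ (fun r => ?_)
    rw [← dot_vrow]; exact h r
  funext q
  have := hc ⟨(q : ℕ), by omega⟩ (Fin.last k)
  have h1 : ext0 x ⟨(q : ℕ), by omega⟩ = x q := by simp [ext0, q.isLt]
  have h2 : ext0 x (Fin.last k) = 0 := by simp [ext0]
  rw [h1, h2] at this
  simpa using this

lemma sum_dot_vrow (G : SimpleGraph (Fin (k+1))) (x : Fin k → ℝ) :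
    ∑ r, ∑ q, x q * vrow G r q = 0 := by
  have : ∀ r, ∑ q, x q * vrow G r q = rowSum G (ext0 x) r := fun r => dot_vrow G r x
  simp only [this]
  exact sum_rowSum G (ext0 x)

/-- Kronecker delta on `Fin m`, real valued. -/
def del {m : ℕ} (i j : Fin m) : ℝ := if i = j then 1 else 0

/-- Existence of real "dual vertex" solutions for a connected graph. -/
lemma exists_dvert (G : SimpleGraph (Fin (k+1))) (hG : G.Connected) (j : Fin (k+1)) :
    ∃ x : Fin k → ℝ, ∀ i, ∑ q, x q * vrow G i q = 1 - (k+1) * del i j := by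
  classical
  set T : (Fin k → ℝ) →ₗ[ℝ] (Fin (k+1) → ℝ) := (Matrix.of (vrow G)).mulVecLin with hT
  have hTapp : ∀ x i, T x i = ∑ q, x q * vrow G i q := by
    intro x i
    simp [hT, Matrix.mulVecLin, Matrix.mulVec, dotProduct, mul_comm]
  have hinj : Function.Injective T := by
    rw [← LinearMap.ker_eq_bot]
    refine (Submodule.eq_bot_iff _).2 fun x hx => ?_
    refine span_vrow G hG x fun r => ?_
    have : T x = 0 := hx
    have := congrFun this r
    rw [hTapp] at this
    simpa using this
  set sumF : (Fin (k+1) → ℝ) →ₗ[ℝ] ℝ :=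
    { toFun := fun z => ∑ i, z i
      map_add' := by intro a b; simp [Finset.sum_add_distrib]
      map_smul' := by intro c a; simp [Finset.mul_sum] } with hsumF
  set K := LinearMap.ker sumF with hK
  have hle : LinearMap.range T ≤ K := by
    rintro _ ⟨x, rfl⟩
    simp only [hK, LinearMap.mem_ker, hsumF, LinearMap.coe_mk, AddHom.coe_mk]
    calc ∑ i, T x i = ∑ i, ∑ q, x q * vrow G i q := by
          refine Finset.sum_congr rfl fun i _ => hTapp x i
      _ = 0 := sum_dot_vrow G x
  have hKne : K ≠ ⊤ := by
    intro htop
    have h1 : (fun _ => (1:ℝ)) ∈ K := htop ▸ Submodule.mem_top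
    simp only [hK, LinearMap.mem_ker, hsumF, LinearMap.coe_mk, AddHom.coe_mk] at h1
    simp at h1
    exact absurd h1 (by positivity)
  have hfinK : Module.finrank ℝ K ≤ k := by
    have := Submodule.finrank_lt (K := ℝ) (V := Fin (k+1) → ℝ) hKne
    rw [Module.finrank_fin_fun] at this
    omega
  have hfinT : Module.finrank ℝ (LinearMap.range T) = k := by
    rw [LinearMap.finrank_range_of_inj hinj, Module.finrank_fin_fun]
  have hrange : LinearMap.range T = K :=
    Submodule.eq_of_le_of_finrank_le hle (by rw [hfinT]; exact hfinK)
  have hmem : (fun i => 1 - (k+1) * del i j) ∈ K := by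
    simp only [hK, LinearMap.mem_ker, hsumF, LinearMap.coe_mk, AddHom.coe_mk]
    rw [Finset.sum_sub_distrib]
    have : ∑ i, ((k:ℝ)+1) * del i j = ((k:ℝ)+1) := by
      rw [← Finset.mul_sum]
      have : ∑ i, del i j = 1 := by
        simp [del]
      rw [this, mul_one]
    push_cast
    simp only [this]
    simp
  rw [← hrange] at hmem
  obtain ⟨x, hx⟩ := hmem
  refine ⟨x, fun i => ?_⟩
  rw [← hTapp, hx]
end Aux2
section Aux3
open SimpleGraph
variable {k : ℕ}

lemma convex_dualset (G : SimpleGraph (Fin (k+1))) :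
    Convex ℝ {x : Fin k → ℝ | ∀ i, ∑ q, x q * vrow G i q ≤ 1} := by
  intro x hx y hy a b ha hb hab
  intro i
  have hsum : ∑ q, (a • x + b • y) q * vrow G i q
      = a * ∑ q, x q * vrow G i q + b * ∑ q, y q * vrow G i q := by
    rw [Finset.mul_sum, Finset.mul_sum, ← Finset.sum_add_distrib]
    refine Finset.sum_congr rfl fun q _ => ?_
    simp only [Pi.add_apply, Pi.smul_apply, smul_eq_mul]
    ring
  rw [hsum]
  calc a * ∑ q, x q * vrow G i q + b * ∑ q, y q * vrow G i q
      ≤ a * 1 + b * 1 := by gcongr; exacts [hx i, hy i]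
    _ = 1 := by rw [mul_one, mul_one, hab]

/-- The dual of `P_G` is cut out by the vertex inequalities. -/
lemma dual_PG (G : SimpleGraph (Fin (k+1))) :
    {x : Fin k → ℝ | ∀ y ∈ PG G, ∑ q, x q * y q ≤ 1}
      = {x : Fin k → ℝ | ∀ i, ∑ q, x q * vrow G i q ≤ 1} := by
  ext x
  simp only [Set.mem_setOf_eq]
  constructor
  · intro h i
    exact h (vrow G i) (by rw [PG_eq]; exact subset_convexHull ℝ _ ⟨i, rfl⟩)
  · intro h y hy
    rw [PG_eq] at hy
    have hconv : Convex ℝ {y : Fin k → ℝ | ∑ q, x q * y q ≤ 1} := by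
      refine convex_halfSpace_le ⟨?_, ?_⟩ 1
      · intro a b
        rw [← Finset.sum_add_distrib]
        refine Finset.sum_congr rfl fun q _ => ?_
        simp [mul_add]
      · intro c a
        simp only [Pi.smul_apply, smul_eq_mul, Finset.mul_sum]
        refine Finset.sum_congr rfl fun q _ => ?_
        ring
    refine convexHull_min ?_ hconv hy
    rintro _ ⟨i, rfl⟩
    exact h i

lemma sum_mul_swap (w : Fin (k+1) → ℝ) (z : Fin (k+1) → (Fin k → ℝ)) (v : Fin k → ℝ) :
    ∑ q, (∑ j, w j • z j) q * v q = ∑ j, w j * ∑ q, z j q * v q := by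
  have h1 : ∀ q, (∑ j, w j • z j) q * v q = ∑ j, w j * z j q * v q := by
    intro q
    rw [Finset.sum_apply, Finset.sum_mul]
    refine Finset.sum_congr rfl fun j _ => ?_
    simp [smul_eq_mul]
  simp only [h1]
  rw [Finset.sum_comm]
  refine Finset.sum_congr rfl fun j _ => ?_
  rw [Finset.mul_sum]
  refine Finset.sum_congr rfl fun q _ => ?_
  ring

/-- Description of the dual as the convex hull of the dual vertices. -/
lemma dual_eq_hull (G : SimpleGraph (Fin (k+1))) (hG : G.Connected)
    (z : Fin (k+1) → (Fin k → ℝ))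
    (hz : ∀ j i, ∑ q, z j q * vrow G i q = 1 - (k+1) * del i j) :
    {x : Fin k → ℝ | ∀ y ∈ PG G, ∑ q, x q * y q ≤ 1}
      = convexHull ℝ (Set.range z) := by
  rw [dual_PG]
  apply Set.Subset.antisymm
  · intro x hx
    simp only [Set.mem_setOf_eq] at hx
    set μ : Fin (k+1) → ℝ := fun j => (1 - ∑ q, x q * vrow G j q) / (k+1) with hμ
    have hμ0 : ∀ j, 0 ≤ μ j := fun j => div_nonneg (by linarith [hx j]) (by positivity)
    have hμ1 : ∑ j, μ j = 1 := by
      rw [hμ]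
      simp only
      rw [← Finset.sum_div, Finset.sum_sub_distrib, sum_dot_vrow G x, sub_zero,
        Finset.sum_const, Finset.card_univ, Fintype.card_fin, nsmul_eq_mul]
      rw [mul_one, div_eq_one_iff_eq] <;> push_cast <;> [skip; positivity]
      rfl
    have hdelsum : ∀ i, ∑ j, μ j * (((k:ℝ)+1) * del i j) = ((k:ℝ)+1) * μ i := by
      intro i
      have : ∀ j, μ j * (((k:ℝ)+1) * del i j) = if i = j then ((k:ℝ)+1) * μ j else 0 := by
        intro j
        by_cases h : i = j <;> simp [del, h] <;> ring
      simp only [this]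
      rw [Finset.sum_ite_eq, if_pos (Finset.mem_univ i)]
    have hrep : ∑ j, μ j • z j = x := by
      have hdiff : ∀ i, ∑ q, (x - ∑ j, μ j • z j) q * vrow G i q = 0 := by
        intro i
        have hsplit : ∑ q, (x - ∑ j, μ j • z j) q * vrow G i q
            = ∑ q, x q * vrow G i q - ∑ q, (∑ j, μ j • z j) q * vrow G i q := by
          rw [← Finset.sum_sub_distrib]
          refine Finset.sum_congr rfl fun q _ => ?_
          simp only [Pi.sub_apply]
          ring
        rw [hsplit, sum_mul_swap]
        simp only [hz]
        have e : ∑ j, μ j * (1 - ((k:ℝ)+1) * del i j)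
            = ∑ j, μ j - ∑ j, μ j * (((k:ℝ)+1) * del i j) := by
          rw [← Finset.sum_sub_distrib]
          refine Finset.sum_congr rfl fun j _ => ?_
          ring
        rw [e, hμ1, hdelsum i]
        have hki : ((k:ℝ)+1) * μ i = 1 - ∑ q, x q * vrow G i q := by
          rw [hμ]
          simp only
          rw [mul_div_cancel₀]
          positivity
        rw [hki]
        ring
      have h2 := span_vrow G hG _ hdiff
      have := sub_eq_zero.mp h2
      exact this.symm
    exact mem_convexHull_of_exists_fintype μ z hμ0 hμ1 (fun j => ⟨j, rfl⟩) hrep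
  · refine convexHull_min ?_ (convex_dualset G)
    rintro _ ⟨j, rfl⟩
    intro i
    rw [hz j i]
    have : 0 ≤ ((k:ℝ)+1) * del i j := by
      apply mul_nonneg (by positivity)
      by_cases h : i = j <;> simp [del, h]
    linarith
end Aux3
section Aux4
open SimpleGraph
variable {k : ℕ}

/-- The vertices of `P_G` form an affine basis, given a family of dual vertices. -/
lemma zero_mem_interior (G : SimpleGraph (Fin (k+1)))
    (z : Fin (k+1) → (Fin k → ℝ))
    (hz : ∀ j i, ∑ q, z j q * vrow G i q = 1 - (k+1) * del i j) :
    (0 : Fin k → ℝ) ∈ interior (PG G) := by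
  classical
  have hind : AffineIndependent ℝ (vrow G) := by
    rw [affineIndependent_iff]
    intro s w hw0 hcomb j hj
    have hpair : ∑ q, z j q * (∑ e ∈ s, w e • vrow G e) q = 0 := by
      rw [hcomb]; simp
    have hswap : ∑ q, z j q * (∑ e ∈ s, w e • vrow G e) q
        = ∑ e ∈ s, w e * ∑ q, z j q * vrow G e q := by
      have h1 : ∀ q, z j q * (∑ e ∈ s, w e • vrow G e) q = ∑ e ∈ s, w e * vrow G e q * z j q := by
        intro q
        rw [Finset.sum_apply, Finset.mul_sum]
        refine Finset.sum_congr rfl fun e _ => ?_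
        simp only [Pi.smul_apply, smul_eq_mul]; ring
      simp only [h1]
      rw [Finset.sum_comm]
      refine Finset.sum_congr rfl fun e _ => ?_
      rw [Finset.mul_sum]
      refine Finset.sum_congr rfl fun q _ => ?_
      ring
    rw [hswap] at hpair
    simp only [hz] at hpair
    have e2 : ∑ e ∈ s, w e * (1 - ((k:ℝ)+1) * del e j)
        = ∑ e ∈ s, w e - ((k:ℝ)+1) * ∑ e ∈ s, w e * del e j := by
      rw [Finset.mul_sum, ← Finset.sum_sub_distrib]
      refine Finset.sum_congr rfl fun e _ => ?_
      ring
    rw [e2, hw0] at hpair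
    have e3 : ∑ e ∈ s, w e * del e j = w j := by
      have : ∀ e, w e * del e j = if e = j then w e else 0 := by
        intro e; by_cases h : e = j <;> simp [del, h]
      simp only [this]
      rw [Finset.sum_ite_eq', if_pos hj]
    rw [e3] at hpair
    have hk : ((k:ℝ)+1) ≠ 0 := by positivity
    field_simp at hpair
    rw [zero_sub, neg_eq_zero] at hpair
    exact (mul_eq_zero.mp hpair).resolve_left hk
  have htot : affineSpan ℝ (Set.range (vrow G)) = ⊤ := by
    rw [hind.affineSpan_eq_top_iff_card_eq_finrank_add_one]
    simp [Module.finrank_fin_fun]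
  let b : AffineBasis (Fin (k+1)) ℝ (Fin k → ℝ) := ⟨vrow G, hind, htot⟩
  have hb : ⇑b = vrow G := rfl
  have hw1 : ∑ i : Fin (k+1), (((k:ℝ)+1)⁻¹) = 1 := by
    rw [Finset.sum_const, Finset.card_univ, Fintype.card_fin, nsmul_eq_mul]
    push_cast
    rw [mul_inv_cancel₀]
    positivity
  have hcomb0 : (Finset.univ.affineCombination ℝ ⇑b fun _ => (((k:ℝ)+1)⁻¹)) = (0 : Fin k → ℝ) := by
    rw [Finset.affineCombination_eq_linear_combination _ _ _ hw1]
    rw [hb]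
    have hcol : ∀ q, ∑ i, vrow G i q = 0 := by
      intro q
      have := sum_dot_vrow G (fun p => if p = q then 1 else 0)
      simp only [ite_mul, one_mul, zero_mul, Finset.sum_ite_eq', if_pos (Finset.mem_univ _)]
        at this
      exact this
    funext q
    rw [Finset.sum_apply]
    simp only [Pi.smul_apply, smul_eq_mul]
    rw [← Finset.mul_sum, hcol q]
    simp
  have hcoord : ∀ i, b.coord i (0 : Fin k → ℝ) = ((k:ℝ)+1)⁻¹ := by
    intro i
    rw [← hcomb0]
    exact b.coord_apply_combination_of_mem (Finset.mem_univ i) hw1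
  have hset : (0 : Fin k → ℝ) ∈ {x : Fin k → ℝ | ∀ i, 0 < b.coord i x} := by
    intro i
    rw [hcoord i]
    positivity
  have hmem := (AffineBasis.interior_convexHull b).symm ▸ hset
  rw [PG_eq, ← hb]
  exact hmem

/-- Extraction: a reflexive connected Laplacian simplex has *integral* dual vertices. -/
lemma exists_integral_dvert (G : SimpleGraph (Fin (k+1))) (hG : G.Connected)
    (href : IsReflexive (PG G)) (j : Fin (k+1)) :
    ∃ x : Fin k → ℝ, (∀ i, ∑ q, x q * vrow G i q = 1 - (k+1) * del i j) ∧
      ∀ q, ∃ zz : ℤ, x q = (zz : ℝ) := by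
  classical
  obtain ⟨x, hx⟩ := exists_dvert G hG j
  obtain ⟨-, S0, hSint0, hSdual0⟩ := href
  let S : Finset (Fin k → ℝ) := S0
  have hSdual : {y : Fin k → ℝ | ∀ w ∈ PG G, ∑ q, y q * w q ≤ 1}
      = convexHull ℝ (S : Set (Fin k → ℝ)) := hSdual0
  have hSint : ∀ v ∈ S, ∀ q : Fin k, ∃ zz : ℤ, v q = (zz : ℝ) := hSint0
  -- x belongs to the dual, which is the hull of S
  have hxdual : x ∈ {y : Fin k → ℝ | ∀ w ∈ PG G, ∑ q, y q * w q ≤ 1} := by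
    rw [dual_PG]
    intro i
    rw [hx i]
    have : 0 ≤ ((k:ℝ)+1) * del i j := by
      apply mul_nonneg (by positivity)
      by_cases h : i = j <;> simp [del, h]
    linarith
  rw [hSdual] at hxdual
  -- every element of S satisfies the dual inequalities
  have hSle : ∀ s ∈ S, ∀ i, ∑ q, s q * vrow G i q ≤ 1 := by
    intro s hs
    have hsd : s ∈ {y : Fin k → ℝ | ∀ w ∈ PG G, ∑ q, y q * w q ≤ 1} := by
      rw [hSdual]
      exact subset_convexHull ℝ _ hs
    rw [dual_PG] at hsd
    exact hsd
  -- lower bound for the j-th pairing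
  have hSlb : ∀ s ∈ S, (1 : ℝ) - (k+1) ≤ ∑ q, s q * vrow G j q := by
    intro s hs
    have h0 : ∑ i, ∑ q, s q * vrow G i q = 0 := sum_dot_vrow G s
    rw [← Finset.add_sum_erase _ _ (Finset.mem_univ j)] at h0
    have hle : ∑ i ∈ Finset.univ.erase j, ∑ q, s q * vrow G i q ≤ (k : ℝ) := by
      calc ∑ i ∈ Finset.univ.erase j, ∑ q, s q * vrow G i q
          ≤ ∑ i ∈ Finset.univ.erase j, (1:ℝ) :=
            Finset.sum_le_sum fun i _ => hSle s hs i
        _ = (k : ℝ) := by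
            rw [Finset.sum_const, Finset.card_erase_of_mem (Finset.mem_univ j)]
            simp
    have : ∑ q, s q * vrow G j q = - ∑ i ∈ Finset.univ.erase j, ∑ q, s q * vrow G i q := by
      linarith
    rw [this]
    linarith
  -- representation of x as a convex combination of S
  rw [Finset.convexHull_eq] at hxdual
  obtain ⟨ν, hν0, hν1, hcm⟩ := hxdual
  rw [Finset.centerMass_eq_of_sum_1 _ _ hν1] at hcm
  -- pair the representation with row j
  have hpair : ∑ s ∈ S, ν s * ∑ q, s q * vrow G j q = 1 - ((k:ℝ)+1) := by
    have h1 : ∑ q, x q * vrow G j q = 1 - ((k:ℝ)+1) := by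
      rw [hx j]; simp [del]
    rw [← h1, ← hcm]
    have h2 : ∀ q, (∑ s ∈ S, ν s • id s) q * vrow G j q
        = ∑ s ∈ S, ν s * s q * vrow G j q := by
      intro q
      rw [Finset.sum_apply, Finset.sum_mul]
      refine Finset.sum_congr rfl fun s _ => ?_
      simp only [Pi.smul_apply, smul_eq_mul, id]
    simp only [h2]
    rw [Finset.sum_comm]
    refine Finset.sum_congr rfl fun s _ => ?_
    rw [Finset.mul_sum]
    refine Finset.sum_congr rfl fun q _ => ?_
    ring
  -- hence some point of S attains the minimum
  have hzero : ∑ s ∈ S, ν s * (∑ q, s q * vrow G j q - (1 - ((k:ℝ)+1))) = 0 := by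
    have e : ∑ s ∈ S, ν s * (∑ q, s q * vrow G j q - (1 - ((k:ℝ)+1)))
        = ∑ s ∈ S, ν s * ∑ q, s q * vrow G j q - (1 - ((k:ℝ)+1)) * ∑ s ∈ S, ν s := by
      rw [Finset.mul_sum, ← Finset.sum_sub_distrib]
      refine Finset.sum_congr rfl fun s _ => ?_
      ring
    rw [e, hpair, hν1]
    ring
  have hterm : ∀ s ∈ S, ν s * (∑ q, s q * vrow G j q - (1 - ((k:ℝ)+1))) = 0 :=
    (Finset.sum_eq_zero_iff_of_nonneg fun s hs =>
      mul_nonneg (hν0 s hs) (by linarith [hSlb s hs])).mp hzero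
  have hex : ∃ s ∈ S, 0 < ν s := by
    by_contra hcon
    push_neg at hcon
    have : ∑ s ∈ S, ν s = 0 := Finset.sum_eq_zero fun s hs =>
      le_antisymm (hcon s hs) (hν0 s hs)
    rw [hν1] at this
    norm_num at this
  obtain ⟨s₀, hs₀S, hs₀pos⟩ := hex
  have hs₀j : ∑ q, s₀ q * vrow G j q = 1 - ((k:ℝ)+1) := by
    have := hterm s₀ hs₀S
    rcases mul_eq_zero.mp this with h | h
    · exact absurd h (ne_of_gt hs₀pos)
    · linarith
  -- the other pairings must equal 1
  have hs₀i : ∀ i, ∑ q, s₀ q * vrow G i q = 1 - (k+1) * del i j := by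
    intro i
    by_cases hij : i = j
    · rw [hij, hs₀j]; simp [del]
    · have h0 : ∑ i, ∑ q, s₀ q * vrow G i q = 0 := sum_dot_vrow G s₀
      rw [← Finset.add_sum_erase _ _ (Finset.mem_univ j), hs₀j] at h0
      have hsum : ∑ i ∈ Finset.univ.erase j, ∑ q, s₀ q * vrow G i q = (k : ℝ) := by
        linarith
      have hzero2 : ∑ i ∈ Finset.univ.erase j, (1 - ∑ q, s₀ q * vrow G i q) = 0 := by
        rw [Finset.sum_sub_distrib, hsum, Finset.sum_const,
          Finset.card_erase_of_mem (Finset.mem_univ j)]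
        simp
      have := (Finset.sum_eq_zero_iff_of_nonneg fun i hi =>
        by linarith [hSle s₀ hs₀S i]).mp hzero2 i
        (Finset.mem_erase.mpr ⟨hij, Finset.mem_univ i⟩)
      have h1 : ∑ q, s₀ q * vrow G i q = 1 := by linarith
      rw [h1]
      simp [del, hij]
  exact ⟨s₀, hs₀i, fun q => hSint s₀ hs₀S q⟩
end Aux4
section Aux5
open SimpleGraph
variable {n : ℕ}

/-- Left embedding. -/
abbrev fL (n : ℕ) : Fin (n+1) → Fin ((n+1)+(n+1)) := Fin.castAdd (n+1)
/-- Right embedding. -/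
abbrev fR (n : ℕ) : Fin (n+1) → Fin ((n+1)+(n+1)) := Fin.natAdd (n+1)

lemma bridge_adj_ll (G' G'' : SimpleGraph (Fin (n+1))) (a b : Fin (n+1)) :
    (bridge G' G'').Adj (fL n a) (fL n b) ↔ G'.Adj a b := by
  rw [bridge, SimpleGraph.fromRel_adj]
  have ha := a.isLt
  have hb := b.isLt
  constructor
  · rintro ⟨hne, h | h⟩ <;>
      rcases h with ⟨hu, hv, hadj⟩ | ⟨hu, hv, hadj⟩ | ⟨h1, h2⟩
    · have e1 : (⟨((fL n a : Fin ((n+1)+(n+1))) : ℕ), hu⟩ : Fin (n+1)) = a := by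
        ext; simp
      have e2 : (⟨((fL n b : Fin ((n+1)+(n+1))) : ℕ), hv⟩ : Fin (n+1)) = b := by
        ext; simp
      rwa [e1, e2] at hadj
    · simp only [Fin.coe_castAdd] at hu; omega
    · simp only [Fin.coe_castAdd] at h2; omega
    · have e1 : (⟨((fL n b : Fin ((n+1)+(n+1))) : ℕ), hu⟩ : Fin (n+1)) = b := by
        ext; simp
      have e2 : (⟨((fL n a : Fin ((n+1)+(n+1))) : ℕ), hv⟩ : Fin (n+1)) = a := by
        ext; simp
      rw [e1, e2] at hadj
      exact hadj.symm
    · simp only [Fin.coe_castAdd] at hu; omega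
    · simp only [Fin.coe_castAdd] at h2; omega
  · intro hadj
    refine ⟨?_, Or.inl (Or.inl ⟨by simpa using ha, by simpa using hb, ?_⟩)⟩
    · intro hcon
      apply G'.ne_of_adj hadj
      ext
      simpa [Fin.ext_iff] using hcon
    · have e1 : (⟨((fL n a : Fin ((n+1)+(n+1))) : ℕ), by simpa using ha⟩ : Fin (n+1)) = a := by
        ext; simp
      have e2 : (⟨((fL n b : Fin ((n+1)+(n+1))) : ℕ), by simpa using hb⟩ : Fin (n+1)) = b := by
        ext; simp
      convert hadj using 2 <;> ext <;> simp

lemma bridge_adj_rr (G' G'' : SimpleGraph (Fin (n+1))) (a b : Fin (n+1)) :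
    (bridge G' G'').Adj (fR n a) (fR n b) ↔ G''.Adj a b := by
  rw [bridge, SimpleGraph.fromRel_adj]
  have ha := a.isLt
  have hb := b.isLt
  constructor
  · rintro ⟨hne, h | h⟩ <;>
      rcases h with ⟨hu, hv, hadj⟩ | ⟨hu, hv, hadj⟩ | ⟨h1, h2⟩
    · simp only [Fin.coe_natAdd] at hu; omega
    · convert hadj using 2 <;>
        (try simp only [Fin.coe_natAdd]) <;> omega
    · simp only [Fin.coe_natAdd] at h1; omega
    · simp only [Fin.coe_natAdd] at hu; omega
    · have : G''.Adj b a := by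
        convert hadj using 2 <;>
          (try simp only [Fin.coe_natAdd]) <;> omega
      exact this.symm
    · simp only [Fin.coe_natAdd] at h1; omega
  · intro hadj
    refine ⟨?_, Or.inl (Or.inr (Or.inl ⟨by simp only [Fin.coe_natAdd]; omega,
      by simp only [Fin.coe_natAdd]; omega, ?_⟩))⟩
    · intro hcon
      have hv := congrArg Fin.val hcon
      simp only [Fin.coe_natAdd] at hv
      exact G''.ne_of_adj hadj (Fin.ext (by omega))
    · convert hadj using 2 <;>
        (try simp only [Fin.coe_natAdd]) <;> omega

lemma bridge_adj_lr (G' G'' : SimpleGraph (Fin (n+1))) (a b : Fin (n+1)) :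
    (bridge G' G'').Adj (fL n a) (fR n b) ↔ (a = Fin.last n ∧ b = Fin.last n) := by
  rw [bridge, SimpleGraph.fromRel_adj]
  have ha := a.isLt
  have hb := b.isLt
  constructor
  · rintro ⟨hne, h | h⟩ <;>
      rcases h with ⟨hu, hv, hadj⟩ | ⟨hu, hv, hadj⟩ | ⟨h1, h2⟩
    · simp only [Fin.coe_natAdd] at hv; omega
    · simp only [Fin.coe_castAdd] at hu; omega
    · simp only [Fin.coe_castAdd, Fin.coe_natAdd] at h1 h2
      exact ⟨Fin.ext (by simp only [Fin.val_last]; omega),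
        Fin.ext (by simp only [Fin.val_last]; omega)⟩
    · simp only [Fin.coe_natAdd] at hu; omega
    · simp only [Fin.coe_castAdd] at hv; omega
    · simp only [Fin.coe_castAdd, Fin.coe_natAdd] at h1 h2
      omega
  · rintro ⟨rfl, rfl⟩
    refine ⟨?_, Or.inl (Or.inr (Or.inr
      ⟨by simp only [Fin.coe_castAdd, Fin.val_last]; omega,
       by simp only [Fin.coe_natAdd, Fin.val_last]; omega⟩))⟩
    · intro hcon
      have hv := congrArg Fin.val hcon
      simp only [Fin.coe_castAdd, Fin.coe_natAdd, Fin.val_last] at hv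
      omega

/-- The bridge of two connected graphs is connected. -/
lemma bridge_connected (G' G'' : SimpleGraph (Fin (n+1))) (hG' : G'.Connected)
    (hG'' : G''.Connected) : (bridge G' G'').Connected := by
  rw [SimpleGraph.connected_iff]
  refine ⟨?_, ⟨fL n 0⟩⟩
  have hL : ∀ a b : Fin (n+1), (bridge G' G'').Reachable (fL n a) (fL n b) := by
    intro a b
    exact SimpleGraph.Reachable.map
      (⟨fL n, fun h => (bridge_adj_ll G' G'' _ _).mpr h⟩ : G' →g bridge G' G'')
      (hG'.preconnected a b)
  have hR : ∀ a b : Fin (n+1), (bridge G' G'').Reachable (fR n a) (fR n b) := by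
    intro a b
    exact SimpleGraph.Reachable.map
      (⟨fR n, fun h => (bridge_adj_rr G' G'' _ _).mpr h⟩ : G'' →g bridge G' G'')
      (hG''.preconnected a b)
  have hLR : (bridge G' G'').Reachable (fL n (Fin.last n)) (fR n (Fin.last n)) :=
    SimpleGraph.Adj.reachable ((bridge_adj_lr G' G'' _ _).mpr ⟨rfl, rfl⟩)
  intro u v
  refine Fin.addCases (fun a => ?_) (fun a => ?_) u <;>
    refine Fin.addCases (fun b => ?_) (fun b => ?_) v
  · exact hL a b
  · exact ((hL a (Fin.last n)).trans hLR).trans (hR (Fin.last n) b)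
  · exact ((hR a (Fin.last n)).trans hLR.symm).trans (hL (Fin.last n) b)
  · exact hR a b

lemma aInd_of_adj {m : ℕ} (G : SimpleGraph (Fin m)) {r c : Fin m} (h : G.Adj r c) :
    aInd G r c = 1 := by simp [aInd, h]

lemma aInd_of_not_adj {m : ℕ} (G : SimpleGraph (Fin m)) {r c : Fin m} (h : ¬ G.Adj r c) :
    aInd G r c = 0 := by simp [aInd, h]

lemma aInd_bridge_ll (G' G'' : SimpleGraph (Fin (n+1))) (a b : Fin (n+1)) :
    aInd (bridge G' G'') (fL n a) (fL n b) = aInd G' a b := by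
  by_cases h : G'.Adj a b
  · rw [aInd_of_adj _ ((bridge_adj_ll G' G'' a b).mpr h), aInd_of_adj _ h]
  · rw [aInd_of_not_adj _ (fun hc => h ((bridge_adj_ll G' G'' a b).mp hc)),
      aInd_of_not_adj _ h]

lemma aInd_bridge_rr (G' G'' : SimpleGraph (Fin (n+1))) (a b : Fin (n+1)) :
    aInd (bridge G' G'') (fR n a) (fR n b) = aInd G'' a b := by
  by_cases h : G''.Adj a b
  · rw [aInd_of_adj _ ((bridge_adj_rr G' G'' a b).mpr h), aInd_of_adj _ h]
  · rw [aInd_of_not_adj _ (fun hc => h ((bridge_adj_rr G' G'' a b).mp hc)),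
      aInd_of_not_adj _ h]

lemma aInd_bridge_lr (G' G'' : SimpleGraph (Fin (n+1))) (a b : Fin (n+1)) :
    aInd (bridge G' G'') (fL n a) (fR n b)
      = (if a = Fin.last n then (1:ℝ) else 0) * (if b = Fin.last n then (1:ℝ) else 0) := by
  by_cases h : a = Fin.last n ∧ b = Fin.last n
  · rw [aInd_of_adj _ ((bridge_adj_lr G' G'' a b).mpr h), if_pos h.1, if_pos h.2, mul_one]
  · rw [aInd_of_not_adj _ (fun hc => h ((bridge_adj_lr G' G'' a b).mp hc))]
    rcases not_and_or.mp h with h3 | h3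
    · rw [if_neg h3, zero_mul]
    · rw [if_neg h3, mul_zero]

lemma aInd_bridge_rl (G' G'' : SimpleGraph (Fin (n+1))) (a b : Fin (n+1)) :
    aInd (bridge G' G'') (fR n a) (fL n b)
      = (if a = Fin.last n then (1:ℝ) else 0) * (if b = Fin.last n then (1:ℝ) else 0) := by
  rw [aInd_symm, aInd_bridge_lr]
  ring

/-- Splitting `rowSum` of the bridge along a left-vertex row. -/
lemma rowSum_bridge_l (G' G'' : SimpleGraph (Fin (n+1))) (y : Fin ((n+1)+(n+1)) → ℝ)
    (p : Fin (n+1)) :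
    rowSum (bridge G' G'') y (fL n p) = rowSum G' (y ∘ fL n) p
      + (if p = Fin.last n then y (fL n (Fin.last n)) - y (fR n (Fin.last n)) else 0) := by
  unfold rowSum
  rw [Fin.sum_univ_add]
  congr 1
  · refine Finset.sum_congr rfl fun a _ => ?_
    rw [aInd_bridge_ll]
    rfl
  · by_cases hp : p = Fin.last n
    · rw [if_pos hp]
      rw [Finset.sum_eq_single_of_mem (Fin.last n) (Finset.mem_univ _)
        (fun b _ hb => by rw [aInd_bridge_lr, if_neg hb, mul_zero, zero_mul])]
      rw [aInd_bridge_lr, if_pos rfl, if_pos hp, hp, one_mul, one_mul]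
    · rw [if_neg hp]
      exact Finset.sum_eq_zero fun b _ => by
        rw [aInd_bridge_lr, if_neg hp, zero_mul, zero_mul]

/-- Splitting `rowSum` of the bridge along a right-vertex row. -/
lemma rowSum_bridge_r (G' G'' : SimpleGraph (Fin (n+1))) (y : Fin ((n+1)+(n+1)) → ℝ)
    (p : Fin (n+1)) :
    rowSum (bridge G' G'') y (fR n p) = rowSum G'' (y ∘ fR n) p
      + (if p = Fin.last n then y (fR n (Fin.last n)) - y (fL n (Fin.last n)) else 0) := by
  unfold rowSum
  rw [Fin.sum_univ_add]
  rw [add_comm (∑ i : Fin (n+1), _)]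
  congr 1
  · refine Finset.sum_congr rfl fun a _ => ?_
    rw [aInd_bridge_rr]
    rfl
  · by_cases hp : p = Fin.last n
    · rw [if_pos hp]
      rw [Finset.sum_eq_single_of_mem (Fin.last n) (Finset.mem_univ _)
        (fun b _ hb => by rw [aInd_bridge_rl, if_neg hb, mul_zero, zero_mul])]
      rw [aInd_bridge_rl, if_pos rfl, if_pos hp, hp, one_mul, one_mul]
    · rw [if_neg hp]
      exact Finset.sum_eq_zero fun b _ => by
        rw [aInd_bridge_rl, if_neg hp, zero_mul, zero_mul]

/-- `rowSum` applied to an affine combination of two vectors. -/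
lemma rowSum_comb {m : ℕ} (G : SimpleGraph (Fin m)) (u v : Fin m → ℝ) (α β c : ℝ) (r : Fin m) :
    rowSum G (fun i => α * u i + β * v i + c) r = α * rowSum G u r + β * rowSum G v r := by
  unfold rowSum
  rw [Finset.mul_sum, Finset.mul_sum, ← Finset.sum_add_distrib]
  refine Finset.sum_congr rfl fun i _ => ?_
  ring
end Aux5
section Aux6
open SimpleGraph
variable {n : ℕ}

/-- Concatenation of two vectors. -/
noncomputable def glue (u v : Fin (n+1) → ℝ) : Fin ((n+1)+(n+1)) → ℝ :=
  fun i => if h : (i : ℕ) < n+1 then u ⟨(i : ℕ), h⟩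
    else v ⟨(i : ℕ) - (n+1), by have := i.isLt; omega⟩

lemma glue_fL (u v : Fin (n+1) → ℝ) (p : Fin (n+1)) : glue u v (fL n p) = u p := by
  have h : ((fL n p : Fin ((n+1)+(n+1))) : ℕ) < n+1 := by
    simp only [Fin.coe_castAdd]; exact p.isLt
  simp only [glue]
  rw [dif_pos h]
  congr 1

lemma glue_fR (u v : Fin (n+1) → ℝ) (p : Fin (n+1)) : glue u v (fR n p) = v p := by
  have h : ¬ ((fR n p : Fin ((n+1)+(n+1))) : ℕ) < n+1 := by
    simp only [Fin.coe_natAdd]; omega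
  simp only [glue]
  rw [dif_neg h]
  congr 1
  apply Fin.ext
  simp only [Fin.coe_natAdd]
  omega

lemma glue_last (u v : Fin (n+1) → ℝ) : glue u v (Fin.last (n+1+n)) = v (Fin.last n) := by
  have h : ¬ ((Fin.last (n+1+n) : Fin (n+1+n+1)) : ℕ) < n+1 := by
    simp only [Fin.val_last]; omega
  simp only [glue]
  rw [dif_neg h]
  congr 1
  apply Fin.ext
  simp only [Fin.val_last]
  omega

lemma ext0_last {K : ℕ} (x : Fin K → ℝ) : ext0 x (Fin.last K) = 0 := by
  simp [ext0]

/-- Truncation: drop the last coordinate. -/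
noncomputable def trunc {K : ℕ} (w : Fin (K+1) → ℝ) : Fin K → ℝ :=
  fun q => w ⟨(q : ℕ), by omega⟩

lemma ext0_trunc {K : ℕ} (w : Fin (K+1) → ℝ) (h : w (Fin.last K) = 0) :
    ext0 (trunc w) = w := by
  funext i
  by_cases hi : (i : ℕ) < K
  · simp only [ext0, trunc, dif_pos hi]
  · have hlast : i = Fin.last K := by
      apply Fin.ext
      have := i.isLt
      simp only [Fin.val_last]
      omega
    rw [hlast]
    simp only [ext0]
    rw [dif_neg (by simp only [Fin.val_last]; omega : ¬ ((Fin.last K : Fin (K+1)) : ℕ) < K)]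
    exact h.symm

/-- delta lemmas for the embeddings -/
lemma del_fLfL (p p' : Fin (n+1)) : del (fL n p) (fL n p') = del p p' := by
  by_cases h : p = p'
  · simp [del, h]
  · have h2 : fL n p ≠ fL n p' := by
      intro hc
      exact h (Fin.ext (by simpa [Fin.ext_iff] using congrArg Fin.val hc))
    simp only [del]
    rw [if_neg h2, if_neg h]

lemma del_fRfR (p p' : Fin (n+1)) : del (fR n p) (fR n p') = del p p' := by
  by_cases h : p = p'
  · simp [del, h]
  · have h2 : fR n p ≠ fR n p' := by
      intro hc
      have := congrArg Fin.val hc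
      simp only [Fin.coe_natAdd] at this
      exact h (Fin.ext (by omega))
    simp only [del]
    rw [if_neg h2, if_neg h]

lemma del_fLfR (p p' : Fin (n+1)) : del (fL n p) (fR n p') = 0 := by
  have h2 : fL n p ≠ fR n p' := by
    intro hc
    have := congrArg Fin.val hc
    simp only [Fin.coe_natAdd, Fin.coe_castAdd] at this
    have := p.isLt
    omega
  simp only [del]
  rw [if_neg h2]

lemma del_fRfL (p p' : Fin (n+1)) : del (fR n p) (fL n p') = 0 := by
  have h2 : fR n p ≠ fL n p' := by
    intro hc
    have := congrArg Fin.val hc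
    simp only [Fin.coe_natAdd, Fin.coe_castAdd] at this
    have := p'.isLt
    omega
  simp only [del]
  rw [if_neg h2]

/-- The dual-vertex family for the bridge. -/
noncomputable def Yb (x' x'' : Fin (n+1) → Fin n → ℝ) :
    Fin ((n+1)+(n+1)) → Fin ((n+1)+(n+1)) → ℝ :=
  Fin.addCases
    (fun p => glue (fun q => 2 * ext0 (x' p) q - ext0 (x' (Fin.last n)) q - ((n:ℝ)+1))
      (ext0 (x'' (Fin.last n))))
    (fun p => glue (fun q => ext0 (x' (Fin.last n)) q + ((n:ℝ)+1))
      (fun q => 2 * ext0 (x'' p) q - ext0 (x'' (Fin.last n)) q))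

lemma Yb_fL (x' x'' : Fin (n+1) → Fin n → ℝ) (p : Fin (n+1)) :
    Yb x' x'' (fL n p)
      = glue (fun q => 2 * ext0 (x' p) q - ext0 (x' (Fin.last n)) q - ((n:ℝ)+1))
        (ext0 (x'' (Fin.last n))) := by
  simp only [Yb]
  rw [Fin.addCases_left]

lemma Yb_fR (x' x'' : Fin (n+1) → Fin n → ℝ) (p : Fin (n+1)) :
    Yb x' x'' (fR n p)
      = glue (fun q => ext0 (x' (Fin.last n)) q + ((n:ℝ)+1))
        (fun q => 2 * ext0 (x'' p) q - ext0 (x'' (Fin.last n)) q) := by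
  simp only [Yb]
  rw [Fin.addCases_right]

lemma Yb_last (x' x'' : Fin (n+1) → Fin n → ℝ) (j : Fin ((n+1)+(n+1))) :
    Yb x' x'' j (Fin.last (n+1+n)) = 0 := by
  refine Fin.addCases (fun p => ?_) (fun p => ?_) j
  · rw [Yb_fL, glue_last, ext0_last]
  · rw [Yb_fR, glue_last, ext0_last, ext0_last]
    ring
end Aux6
section Aux7
open SimpleGraph
variable {n : ℕ}

lemma bridge_master (G' G'' : SimpleGraph (Fin (n+1))) (x' x'' : Fin (n+1) → Fin n → ℝ)
    (hx' : ∀ j i, ∑ q, x' j q * vrow G' i q = 1 - ((n:ℝ)+1) * del i j)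
    (hx'' : ∀ j i, ∑ q, x'' j q * vrow G'' i q = 1 - ((n:ℝ)+1) * del i j)
    (j i : Fin ((n+1)+(n+1))) :
    rowSum (bridge G' G'') (Yb x' x'' j) i = 1 - (((n+1+n : ℕ) : ℝ)+1) * del i j := by
  have hR' : ∀ p r, rowSum G' (ext0 (x' p)) r = 1 - ((n:ℝ)+1) * del r p := by
    intro p r; rw [← dot_vrow]; exact hx' p r
  have hR'' : ∀ p r, rowSum G'' (ext0 (x'' p)) r = 1 - ((n:ℝ)+1) * del r p := by
    intro p r; rw [← dot_vrow]; exact hx'' p r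
  have hM : (((n+1+n : ℕ) : ℝ)+1) = 2 * ((n:ℝ)+1) := by push_cast; ring
  refine Fin.addCases (fun pj => ?_) (fun pj => ?_) j <;>
    refine Fin.addCases (fun pi => ?_) (fun pi => ?_) i
  · -- j left, i left
    rw [Yb_fL, rowSum_bridge_l]
    have hcomp : (glue (fun q => 2 * ext0 (x' pj) q - ext0 (x' (Fin.last n)) q - ((n:ℝ)+1))
        (ext0 (x'' (Fin.last n)))) ∘ fL n
        = fun q => 2 * ext0 (x' pj) q + (-1) * ext0 (x' (Fin.last n)) q + (-((n:ℝ)+1)) := by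
      funext q
      rw [Function.comp_apply, glue_fL]
      ring
    rw [hcomp, rowSum_comb, hR', hR', del_fLfL, hM]
    simp only [glue_fL, glue_fR, ext0_last]
    by_cases hp : pi = Fin.last n
    · rw [if_pos hp, hp]
      simp only [del]
      split_ifs <;> ring
    · rw [if_neg hp]
      have h0 : del pi (Fin.last n) = 0 := by simp [del, hp]
      rw [h0]
      ring
  · -- j left, i right
    rw [Yb_fL, rowSum_bridge_r]
    have hcomp : (glue (fun q => 2 * ext0 (x' pj) q - ext0 (x' (Fin.last n)) q - ((n:ℝ)+1))
        (ext0 (x'' (Fin.last n)))) ∘ fR n = ext0 (x'' (Fin.last n)) := by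
      funext q
      rw [Function.comp_apply, glue_fR]
    rw [hcomp, hR'', del_fRfL, hM]
    simp only [glue_fL, glue_fR, ext0_last]
    by_cases hp : pi = Fin.last n
    · rw [if_pos hp, hp]
      simp only [del]
      split_ifs <;> ring
    · rw [if_neg hp]
      have h0 : del pi (Fin.last n) = 0 := by simp [del, hp]
      rw [h0]
      ring
  · -- j right, i left
    rw [Yb_fR, rowSum_bridge_l]
    have hcomp : (glue (fun q => ext0 (x' (Fin.last n)) q + ((n:ℝ)+1))
        (fun q => 2 * ext0 (x'' pj) q - ext0 (x'' (Fin.last n)) q)) ∘ fL n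
        = fun q => 1 * ext0 (x' (Fin.last n)) q + 0 * ext0 (x' (Fin.last n)) q + ((n:ℝ)+1) := by
      funext q
      rw [Function.comp_apply, glue_fL]
      ring
    rw [hcomp, rowSum_comb, hR', del_fLfR, hM]
    simp only [glue_fL, glue_fR, ext0_last]
    by_cases hp : pi = Fin.last n
    · rw [if_pos hp, hp]
      simp only [del]
      split_ifs <;> ring
    · rw [if_neg hp]
      have h0 : del pi (Fin.last n) = 0 := by simp [del, hp]
      rw [h0]
      ring
  · -- j right, i right
    rw [Yb_fR, rowSum_bridge_r]
    have hcomp : (glue (fun q => ext0 (x' (Fin.last n)) q + ((n:ℝ)+1))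
        (fun q => 2 * ext0 (x'' pj) q - ext0 (x'' (Fin.last n)) q)) ∘ fR n
        = fun q => 2 * ext0 (x'' pj) q + (-1) * ext0 (x'' (Fin.last n)) q + 0 := by
      funext q
      rw [Function.comp_apply, glue_fR]
      ring
    rw [hcomp, rowSum_comb, hR'', hR'', del_fRfR, hM]
    simp only [glue_fL, glue_fR, ext0_last]
    by_cases hp : pi = Fin.last n
    · rw [if_pos hp, hp]
      simp only [del]
      split_ifs <;> ring
    · rw [if_neg hp]
      have h0 : del pi (Fin.last n) = 0 := by simp [del, hp]
      rw [h0]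
      ring
end Aux7
/-- If `P_{G'}` and `P_{G''}` are reflexive (both graphs on `n+1`
vertices), then the Laplacian simplex of their bridge is reflexive. -/
theorem isReflexive_PG_bridge {n : ℕ}
    (G' G'' : SimpleGraph (Fin (n+1))) (hG' : G'.Connected) (hG'' : G''.Connected)
    (href' : IsReflexive (PG G')) (href'' : IsReflexive (PG G'')) :
    IsReflexive (PG (bridge G' G'')) := by
  classical
  have hH : (bridge G' G'').Connected := bridge_connected G' G'' hG' hG''
  choose x' hx' hx'int using fun j => exists_integral_dvert G' hG' href' j
  choose x'' hx'' hx''int using fun j => exists_integral_dvert G'' hG'' href'' j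
  set z : Fin ((n+1)+(n+1)) → Fin (n+1+n) → ℝ := fun j => trunc (Yb x' x'' j) with hzdef
  have hext : ∀ j, ext0 (z j) = Yb x' x'' j := fun j => ext0_trunc _ (Yb_last x' x'' j)
  have hrel : ∀ j i, ∑ q, z j q * vrow (k := n+1+n) (bridge G' G'') i q
      = 1 - (((n+1+n : ℕ) : ℝ) + 1) * del i j := by
    intro j i
    rw [dot_vrow (k := n+1+n), hext j]
    exact bridge_master G' G'' x' x'' hx' hx'' j i
  -- integrality of the dual vertices of the bridge
  have hext0' : ∀ p t, ∃ zz : ℤ, ext0 (x' p) t = (zz : ℝ) := by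
    intro p t
    by_cases h : (t : ℕ) < n
    · obtain ⟨zz, hzz⟩ := hx'int p ⟨(t : ℕ), h⟩
      exact ⟨zz, by rw [ext0, dif_pos h]; exact hzz⟩
    · exact ⟨0, by rw [ext0, dif_neg h]; simp⟩
  have hext0'' : ∀ p t, ∃ zz : ℤ, ext0 (x'' p) t = (zz : ℝ) := by
    intro p t
    by_cases h : (t : ℕ) < n
    · obtain ⟨zz, hzz⟩ := hx''int p ⟨(t : ℕ), h⟩
      exact ⟨zz, by rw [ext0, dif_pos h]; exact hzz⟩
    · exact ⟨0, by rw [ext0, dif_neg h]; simp⟩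
  have hYint : ∀ j i, ∃ zz : ℤ, Yb x' x'' j i = (zz : ℝ) := by
    intro j i
    refine Fin.addCases (fun p => ?_) (fun p => ?_) j
    · rw [Yb_fL]
      by_cases hi : (i : ℕ) < n+1
      · rw [glue, dif_pos hi]
        obtain ⟨z1, e1⟩ := hext0' p ⟨(i : ℕ), hi⟩
        obtain ⟨z2, e2⟩ := hext0' (Fin.last n) ⟨(i : ℕ), hi⟩
        refine ⟨2 * z1 - z2 - (n+1), ?_⟩
        rw [e1, e2]
        push_cast
        ring
      · rw [glue, dif_neg hi]
        obtain ⟨z1, e1⟩ := hext0'' (Fin.last n) ⟨(i : ℕ) - (n+1), by have := i.isLt; omega⟩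
        exact ⟨z1, e1⟩
    · rw [Yb_fR]
      by_cases hi : (i : ℕ) < n+1
      · rw [glue, dif_pos hi]
        obtain ⟨z1, e1⟩ := hext0' (Fin.last n) ⟨(i : ℕ), hi⟩
        refine ⟨z1 + (n+1), ?_⟩
        rw [e1]
        push_cast
        ring
      · rw [glue, dif_neg hi]
        obtain ⟨z1, e1⟩ := hext0'' p ⟨(i : ℕ) - (n+1), by have := i.isLt; omega⟩
        obtain ⟨z2, e2⟩ := hext0'' (Fin.last n) ⟨(i : ℕ) - (n+1), by have := i.isLt; omega⟩
        refine ⟨2 * z1 - z2, ?_⟩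
        rw [e1, e2]
        push_cast
        ring
  constructor
  · exact zero_mem_interior (k := n+1+n) (bridge G' G'') z hrel
  · refine ⟨Finset.image z Finset.univ, ?_, ?_⟩
    · intro v hv q
      obtain ⟨j, -, rfl⟩ := Finset.mem_image.mp hv
      obtain ⟨zz, hzz⟩ := hYint j ⟨(q : ℕ), by have := q.isLt; omega⟩
      exact ⟨zz, by rw [hzdef]; exact hzz⟩
    · have hd := dual_eq_hull (k := n+1+n) (bridge G' G'') hH z hrel
      have himg : ((Finset.image z Finset.univ : Finset (Fin (n+1+n) → ℝ)) :
          Set (Fin (n+1+n) → ℝ)) = Set.range z := by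
        rw [Finset.coe_image, Finset.coe_univ, Set.image_univ]
      rw [himg]
      exact hd
end

section
/- For n ≥ 3, the dual polytope P_{K_n}^∨ of the Laplacian simplex of the complete graph K_n is unimodularly equivalent to the Laplacian simplex P_S of the star graph S on vertex set {1,…,n} (the tree with center n and leaves 1,…,n−1); explicitly, P_{K_n}^∨ is the convex hull of the rows of the n×(n−1) matrix [−I_{n−1} | 𝟙]ᵀ, and multiplying this matrix on the right by −I_{n−1} ∈ GL_{n−1}(ℤ) yields L_S(n). -/
open Matrix Finset

section Aux

lemma lap_eq' {m : ℕ} (G : SimpleGraph (Fin m)) [inst : DecidableRel G.Adj] :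
    lap G = SimpleGraph.lapMatrix ℤ G := by
  unfold lap; congr!

lemma lapTop_apply' (n : ℕ) (r j : Fin (n+1)) :
    lap (⊤ : SimpleGraph (Fin (n+1))) r j = if r = j then (n : ℤ) else -1 := by
  rw [lap_eq']
  by_cases h : r = j
  · subst h
    simp [SimpleGraph.lapMatrix, SimpleGraph.degMatrix, SimpleGraph.complete_graph_degree]
  · simp [SimpleGraph.lapMatrix, SimpleGraph.degMatrix, h,
      Matrix.diagonal_apply_ne _ h, Ne.symm h]

end Aux

/-- The star graph on `{1,…,n+1}` (here `Fin (n+1)`) with center the last vertex and the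
remaining vertices as leaves. -/
def starGraph (n : ℕ) : SimpleGraph (Fin (n+1)) :=
  SimpleGraph.fromRel fun _ v => v = Fin.last n


section Aux2

lemma lapStar_apply' (n : ℕ) (i : Fin (n+1)) (j : Fin n) :
    lap (starGraph n) i j.castSucc =
      if (i:ℕ) = n then -1 else if i = j.castSucc then 1 else 0 := by
  classical
  rw [lap_eq']
  have hjlast : j.castSucc ≠ Fin.last n := Fin.castSucc_lt_last j |>.ne
  by_cases hi : (i:ℕ) = n
  · have : i = Fin.last n := Fin.ext hi
    subst this
    have hadj : (starGraph n).Adj (Fin.last n) j.castSucc := by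
      simp [starGraph, SimpleGraph.fromRel_adj, hjlast.symm]
    simp [SimpleGraph.lapMatrix, SimpleGraph.degMatrix,
      Matrix.diagonal_apply_ne _ (Ne.symm hjlast), hadj, hjlast.symm, hi]
  · have hilast : i ≠ Fin.last n := by
      intro h; exact hi (by simp [h])
    by_cases hij : i = j.castSucc
    · subst hij
      have hdeg : (starGraph n).degree j.castSucc = 1 := by
        rw [← SimpleGraph.card_neighborFinset_eq_degree]
        have : (starGraph n).neighborFinset j.castSucc = {Fin.last n} := by
          ext v
          rw [SimpleGraph.mem_neighborFinset, Finset.mem_singleton]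
          simp only [starGraph, SimpleGraph.fromRel_adj]
          constructor
          · rintro ⟨hne, h | h⟩
            · exact h
            · exact absurd h hjlast
          · rintro rfl; exact ⟨hjlast, Or.inl rfl⟩
        rw [this]; simp
      have hj' : (j:ℕ) ≠ n := j.isLt.ne
      simp [SimpleGraph.lapMatrix, SimpleGraph.degMatrix, hdeg, hj']
    · have hadj : ¬ (starGraph n).Adj i j.castSucc := by
        simp only [starGraph, SimpleGraph.fromRel_adj, not_and, not_or]
        intro _
        exact ⟨hjlast, hilast⟩
      simp [SimpleGraph.lapMatrix, SimpleGraph.degMatrix,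
        Matrix.diagonal_apply_ne _ hij, hadj, hi, hij]

end Aux2

/-- The matrix `[−I_n | 𝟙]ᵀ`: its first `n` rows are `−e₁, …, −eₙ` and its last row is
the all-ones vector. -/
def starDualMatrix (n : ℕ) : Matrix (Fin (n+1)) (Fin n) ℤ :=
  Matrix.of fun i j => if (i : ℕ) = n then 1 else if (i : ℕ) = (j : ℕ) then -1 else 0

/-- For the complete graph on `n+1 ≥ 3` vertices, the dual polytope
`P_{K_{n+1}}^∨` is the convex hull of the rows of `[−I_n | 𝟙]ᵀ`, and multiplying this
matrix on the right by `−I_n ∈ GL_n(ℤ)` yields `L_S(n+1)` for the star graph `S`; hence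
`P_{K_{n+1}}^∨` is unimodularly equivalent to the Laplacian simplex `P_S` of a tree. -/
theorem dual_complete_eq_star (n : ℕ) (hn : 2 ≤ n) :
    ({x : Fin n → ℝ |
        ∀ y ∈ PG (⊤ : SimpleGraph (Fin (n+1))), ∑ i, x i * y i ≤ 1} =
      convexHull ℝ (Set.range fun i : Fin (n+1) => fun j : Fin n =>
        ((starDualMatrix n) i j : ℝ))) ∧
    IsUnit (-1 : Matrix (Fin n) (Fin n) ℤ).det ∧
    starDualMatrix n * (-1 : Matrix (Fin n) (Fin n) ℤ) =
      lapDel (starGraph n) (Fin.last n) := by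
  classical
  have hn1 : (0:ℝ) < (n:ℝ) + 1 := by positivity
  -- the vertex matrices as functions
  set V : Fin (n+1) → Fin n → ℝ := fun r : Fin (n+1) => fun j : Fin n =>
    (lap (⊤ : SimpleGraph (Fin (n+1))) r ⟨(j : ℕ), by have := j.isLt; omega⟩ : ℝ) with hVdef
  set W : Fin (n+1) → Fin n → ℝ := fun i : Fin (n+1) => fun j : Fin n =>
    ((starDualMatrix n) i j : ℝ) with hWdef
  have hPG : PG (⊤ : SimpleGraph (Fin (n+1))) = convexHull ℝ (Set.range V) := rfl
  have hV : ∀ (r : Fin (n+1)) (j : Fin n),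
      V r j = if (r:ℕ) = (j:ℕ) then (n:ℝ) else -1 := by
    intro r j
    show ((lap (⊤ : SimpleGraph (Fin (n+1))) r ⟨(j:ℕ), _⟩ : ℤ) : ℝ) = _
    rw [lapTop_apply']
    by_cases h : (r:ℕ) = (j:ℕ)
    · rw [if_pos (Fin.ext h), if_pos h]; simp
    · rw [if_neg (fun hh => h (congrArg Fin.val hh)), if_neg h]; simp
  have hW : ∀ (i : Fin (n+1)) (j : Fin n),
      W i j = if (i:ℕ) = n then 1 else if (i:ℕ) = (j:ℕ) then -1 else 0 := by
    intro i j
    show ((starDualMatrix n i j : ℤ) : ℝ) = _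
    rw [starDualMatrix]
    split_ifs <;> simp [Matrix.of_apply] <;> simp_all [starDualMatrix]
  have sumV_cast : ∀ (x : Fin n → ℝ) (j : Fin n),
      ∑ k, x k * V j.castSucc k = ((n:ℝ)+1) * x j - ∑ k, x k := by
    intro x j
    have h1 : ∀ k : Fin n, x k * V j.castSucc k
        = ((n:ℝ)+1) * (if k = j then x k else 0) - x k := by
      intro k
      rw [hV]
      simp only [Fin.coe_castSucc]
      by_cases h : k = j
      · subst h; rw [if_pos rfl, if_pos rfl]; ring
      · rw [if_neg (fun hh => h (Fin.ext hh.symm)), if_neg h]; ring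
    rw [Finset.sum_congr rfl (fun k _ => h1 k), Finset.sum_sub_distrib,
      ← Finset.mul_sum, Finset.sum_ite_eq' Finset.univ j x, if_pos (Finset.mem_univ j)]
  have sumV_last : ∀ (x : Fin n → ℝ),
      ∑ k, x k * V (Fin.last n) k = - ∑ k, x k := by
    intro x
    have h1 : ∀ k : Fin n, x k * V (Fin.last n) k = -(x k) := by
      intro k
      rw [hV]
      rw [if_neg]
      · ring
      · exact fun h => absurd h.symm k.isLt.ne
    rw [Finset.sum_congr rfl (fun k _ => h1 k), Finset.sum_neg_distrib]
  have sumW : ∀ i : Fin (n+1), ∑ k, W i k = if (i:ℕ) = n then (n:ℝ) else -1 := by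
    intro i
    by_cases h : (i:ℕ) = n
    · simp [hW, h]
    · have hi : (i:ℕ) < n := lt_of_le_of_ne (Nat.lt_succ_iff.mp i.isLt) h
      rw [if_neg h]
      have h1 : ∀ k : Fin n, W i k = if k = (⟨(i:ℕ), hi⟩ : Fin n) then -1 else 0 := by
        intro k
        rw [hW, if_neg h]
        by_cases hk : k = (⟨(i:ℕ), hi⟩ : Fin n)
        · subst hk; rw [if_pos rfl, if_pos rfl]
        · rw [if_neg (fun hh => hk (Fin.ext hh.symm)), if_neg hk]
      rw [Finset.sum_congr rfl (fun k _ => h1 k), Finset.sum_ite_eq' Finset.univ _ (fun _ => (-1:ℝ)),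
        if_pos (Finset.mem_univ _)]
  -- the three parts
  refine ⟨?_, ?_, ?_⟩
  · -- dual polytope description
    ext x
    simp only [Set.mem_setOf_eq]
    constructor
    · -- dual ⊆ conv hull
      intro hx
      set s : ℝ := ∑ k, x k with hs
      have hmem : ∀ r : Fin (n+1), V r ∈ PG (⊤ : SimpleGraph (Fin (n+1))) := by
        intro r
        rw [hPG]
        exact subset_convexHull ℝ _ ⟨r, rfl⟩
      have c : ∀ r : Fin (n+1), ∑ k, x k * V r k ≤ 1 := fun r => hx (V r) (hmem r)
      have c1 : ∀ j : Fin n, ((n:ℝ)+1) * x j ≤ 1 + s := by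
        intro j
        have := c j.castSucc
        rw [sumV_cast x j] at this
        linarith
      have c2 : -1 ≤ s := by
        have := c (Fin.last n)
        rw [sumV_last x] at this
        linarith
      set μ : Fin (n+1) → ℝ :=
        fun i => (s+1)/((n:ℝ)+1) - (Fin.lastCases 0 x i) with hμdef
      have hμcast : ∀ j : Fin n, μ j.castSucc = (s+1)/((n:ℝ)+1) - x j := by
        intro j; simp [hμdef]
      have hμlast : μ (Fin.last n) = (s+1)/((n:ℝ)+1) := by
        simp [hμdef]
      have hμ0 : ∀ i : Fin (n+1), 0 ≤ μ i := by
        intro i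
        induction i using Fin.lastCases with
        | last =>
          rw [hμlast]
          apply div_nonneg <;> linarith
        | cast j =>
          rw [hμcast]
          rw [sub_nonneg, le_div_iff₀ hn1]
          have := c1 j; linarith
      have hμ1 : ∑ i, μ i = 1 := by
        rw [Fin.sum_univ_castSucc]
        rw [Finset.sum_congr rfl (fun j _ => hμcast j), hμlast,
          Finset.sum_sub_distrib, Finset.sum_const, Finset.card_univ, Fintype.card_fin]
        rw [← hs, nsmul_eq_mul]
        field_simp
        ring
      have hxe : ∑ i, μ i • W i = x := by
        funext j
        rw [Finset.sum_apply]
        rw [Fin.sum_univ_castSucc]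
        have h1 : ∀ k : Fin n, (μ k.castSucc • W k.castSucc) j
            = if k = j then -(μ k.castSucc) else 0 := by
          intro k
          have hkn : ¬ ((k.castSucc : Fin (n+1)) : ℕ) = n := by
            simpa using k.isLt.ne
          rw [Pi.smul_apply, smul_eq_mul, hW, if_neg hkn, Fin.coe_castSucc]
          by_cases hk : k = j
          · subst hk; rw [if_pos rfl, if_pos rfl]; ring
          · rw [if_neg (fun hh => hk (Fin.ext hh)), if_neg hk]; ring
        rw [Finset.sum_congr rfl (fun k _ => h1 k),
          Finset.sum_ite_eq' Finset.univ j (fun k => -(μ k.castSucc)),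
          if_pos (Finset.mem_univ j)]
        have h2 : (μ (Fin.last n) • W (Fin.last n)) j = μ (Fin.last n) := by
          rw [Pi.smul_apply, smul_eq_mul, hW, if_pos (by simp), mul_one]
        rw [h2, hμcast, hμlast]
        ring
      rw [← hxe, ← Finset.centerMass_eq_of_sum_1 Finset.univ W hμ1]
      exact Finset.centerMass_mem_convexHull Finset.univ (fun i _ => hμ0 i)
        (by rw [hμ1]; norm_num) (fun i _ => Set.mem_range_self i)
    · -- conv hull ⊆ dual
      intro hx y hy
      have hxr : ∀ r : Fin (n+1), ∑ k, x k * V r k ≤ 1 := by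
        intro r
        have hconv : Convex ℝ {z : Fin n → ℝ | ∑ k, z k * V r k ≤ 1} := by
          apply convex_halfSpace_le
          constructor
          · intro a b; simp [add_mul, Finset.sum_add_distrib]
          · intro c a; simp [Finset.mul_sum, mul_assoc]
        refine convexHull_min ?_ hconv hx
        rintro _ ⟨i, rfl⟩
        show ∑ k, W i k * V r k ≤ 1
        have hn0 : (0:ℝ) ≤ (n:ℝ) := Nat.cast_nonneg n
        induction r using Fin.lastCases with
        | last =>
          rw [sumV_last (W i), sumW i]
          split_ifs <;> linarith
        | cast j =>
          rw [sumV_cast (W i) j, sumW i, hW i j]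
          by_cases h : (i:ℕ) = n
          · rw [if_pos h, if_pos h]; linarith
          · rw [if_neg h, if_neg h]
            by_cases h2 : (i:ℕ) = (j:ℕ)
            · rw [if_pos h2]; linarith
            · rw [if_neg h2]; linarith
      rw [hPG] at hy
      have hconv : Convex ℝ {y : Fin n → ℝ | ∑ k, x k * y k ≤ 1} := by
        apply convex_halfSpace_le
        constructor
        · intro a b; simp [mul_add, Finset.sum_add_distrib]
        · intro c a
          simp only [Pi.smul_apply, smul_eq_mul, ← Finset.mul_sum]
          rw [Finset.sum_congr rfl (fun k _ => by ring : ∀ k ∈ Finset.univ,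
            x k * (c * a k) = c * (x k * a k))]
          rw [← Finset.mul_sum]
      exact convexHull_min (by rintro _ ⟨r, rfl⟩; exact hxr r) hconv hy
  · -- determinant of -1 is a unit
    rw [show (-1 : Matrix (Fin n) (Fin n) ℤ) = -(1 : Matrix (Fin n) (Fin n) ℤ) from rfl,
      Matrix.det_neg, Matrix.det_one, mul_one]
    rw [Fintype.card_fin]
    exact IsUnit.pow n (isUnit_one.neg : IsUnit (-1 : ℤ))
  · -- the matrix identity
    rw [Matrix.mul_neg, Matrix.mul_one]
    ext i j
    rw [Matrix.neg_apply]
    show -(starDualMatrix n i j) = lap (starGraph n) i ((Fin.last n).succAbove j)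
    rw [Fin.succAbove_last, lapStar_apply', starDualMatrix]
    by_cases h : (i:ℕ) = n
    · simp [h]
    · simp only [Matrix.of_apply, if_neg h]
      by_cases h2 : (i:ℕ) = (j:ℕ)
      · rw [if_pos h2, if_pos (show i = j.castSucc from Fin.ext (by simpa using h2))]
        norm_num
      · rw [if_neg h2, if_neg (fun hh => h2 (by simpa using congrArg Fin.val hh))]
        norm_num
end
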